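/- arXiv:1807.02738 — 8 statements merged into one kernel-verified Lean document; each statement's English description precedes it below -/
import Mathlib

section
/- Let R be an ℕ-graded integral domain whose grading is irredundant, let x be a nonzero homogeneous element of degree d > 0, and set s := gcd{n ∈ ℕ : (R/xR)_n ≠ 0} (the gcd of the degrees in which the quotient ring R/xR, with its induced grading, is nonzero). Then gcd(d, s) = 1. -/
/-- Let `R` be an ℕ-graded integral domain whose grading is irredundant
(`hirr`: the gcd of the degrees in which `R` is nonzero is 1), let `x` be a nonzero
homogeneous element of degree `d > 0`, and let `s` be the gcd of the set of degrees `n`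
in which the induced grading on `R/xR` is nonzero, i.e. in which there exists `r ∈ 𝒜 n`
with `r ∉ (x)` (`hs1`, `hs2` characterize `s` as this gcd).  Then `gcd(d, s) = 1`. -/
theorem stmt_0 {R : Type*} [CommRing R] [IsDomain R]
    (𝒜 : ℕ → AddSubgroup R) [GradedRing 𝒜]
    (hirr : ∀ m : ℕ, (∀ n : ℕ, 𝒜 n ≠ ⊥ → m ∣ n) → m = 1)
    (d : ℕ) (hd : 0 < d) (x : R) (hx0 : x ≠ 0) (hxd : x ∈ 𝒜 d)
    (s : ℕ)
    (hs1 : ∀ n : ℕ, (∃ r ∈ 𝒜 n, r ∉ Ideal.span {x}) → s ∣ n)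
    (hs2 : ∀ m : ℕ, (∀ n : ℕ, (∃ r ∈ 𝒜 n, r ∉ Ideal.span {x}) → m ∣ n) → m ∣ s) :
    Nat.gcd d s = 1 := by
  set g := Nat.gcd d s with hg
  apply hirr
  intro n
  induction n using Nat.strong_induction_on with
  | _ n ih =>
    intro hn
    obtain ⟨r, hrmem, hr0⟩ : ∃ r ∈ 𝒜 n, r ≠ 0 := by
      by_contra h
      push_neg at h
      exact hn ((AddSubgroup.eq_bot_iff_forall _).mpr h)
    by_cases hrx : r ∈ Ideal.span {x}
    · -- r = a * x
      obtain ⟨a, ha⟩ := Ideal.mem_span_singleton'.mp hrx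
      have hdn : d ≤ n := by
        by_contra hlt
        have : (DirectSum.decompose 𝒜 (a * x) n : R) = 0 :=
          DirectSum.coe_decompose_mul_of_right_mem_of_not_le 𝒜 hxd hlt
        rw [ha, DirectSum.decompose_of_mem_same 𝒜 hrmem] at this
        exact hr0 this
      have key : (DirectSum.decompose 𝒜 a (n - d) : R) * x = r := by
        have := DirectSum.coe_decompose_mul_of_right_mem_of_le 𝒜 hxd hdn (a := a)
        rw [ha, DirectSum.decompose_of_mem_same 𝒜 hrmem] at this
        exact this.symm
      have hne : 𝒜 (n - d) ≠ ⊥ := by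
        intro hbot
        have : (DirectSum.decompose 𝒜 a (n - d) : R) = 0 :=
          (AddSubgroup.eq_bot_iff_forall _).mp hbot _ (DirectSum.decompose 𝒜 a (n - d)).2
        rw [this, zero_mul] at key
        exact hr0 key.symm
      have h1 : g ∣ n - d := ih (n - d) (by omega) hne
      have h2 : g ∣ d := Nat.gcd_dvd_left d s
      have := Nat.dvd_add h2 h1
      rwa [Nat.add_sub_cancel' hdn] at this
    · exact dvd_trans (Nat.gcd_dvd_right d s) (hs1 n ⟨r, hrmem, hrx⟩)
end

section
/- Let S be a standard ℕ-graded integral domain of Krull dimension 1 whose degree-0 component S_0 is an algebraically closed field, and assume S is a finitely generated S_0-algebra. Then S is isomorphic, as a graded S_0-algebra, to the polynomial ring S_0[t] with t of degree 1. -/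
/-!
Pick `x ≠ 0` in `S₁`. Given `y ∈ S₁`, the Nullstellensatz provides a `k`-point `φ` of `S` with
`φ x ≠ 0`, and `z = y - (φ y / φ x) • x` is a homogeneous element of `ker φ`. If `z ≠ 0`, the
homogeneous core of `ker φ` is a nonzero homogeneous prime; in dimension one it is maximal, so it
is the irrelevant ideal, which contains `x`: a contradiction. Hence `S₁ = k x`, so `S = k[x]`, and
comparing homogeneous components shows that `x` satisfies no polynomial relation.
-/

open Polynomial

theorem exists_algHom_apply_ne_zero {k S : Type*} [Field k] [IsAlgClosed k] [CommRing S]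
    [IsReduced S] [Algebra k S] [Algebra.FiniteType k S] {x : S} (hx : x ≠ 0) :
    ∃ φ : S →ₐ[k] k, φ x ≠ 0 := by
  have : IsJacobsonRing S := isJacobsonRing_of_finiteType (A := k)
  have hx' : x ∉ (⊥ : Ideal S).jacobson := by
    rwa [IsJacobsonRing.out' ⊥ Ideal.isRadical_bot, Ideal.mem_bot]
  obtain ⟨M, ⟨-, hM⟩, hxM⟩ : ∃ M : Ideal S, (⊥ ≤ M ∧ M.IsMaximal) ∧ x ∉ M := by
    simpa [Ideal.jacobson, Ideal.mem_sInf] using hx'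
  let := Ideal.Quotient.field M
  have : Module.Finite k (S ⧸ M) := finite_of_finite_type_of_isJacobsonRing k (S ⧸ M)
  let e : k ≃ₐ[k] S ⧸ M := AlgEquiv.ofBijective (Algebra.ofId k (S ⧸ M))
    IsAlgClosed.algebraMap_bijective_of_isIntegral
  refine ⟨e.symm.toAlgHom.comp (Ideal.Quotient.mkₐ k M), ?_⟩
  simpa [Ideal.Quotient.eq_zero_iff_mem] using hxM

theorem exists_mem_ne_zero_of_adjoin_eq_top {k S : Type*} [Field k] [CommRing S] [Nontrivial S]
    [Algebra k S] {s : Set S} (hs : Algebra.adjoin k s = ⊤) (hdim : ringKrullDim S ≠ 0) :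
    ∃ x ∈ s, x ≠ 0 := by
  by_contra! h
  have hbot : (⊤ : Subalgebra k S) = ⊥ := by
    rw [← hs, eq_bot_iff]
    exact Algebra.adjoin_le fun a ha => by simp [h a ha]
  let e := RingEquiv.ofBijective (algebraMap k S) (Algebra.bijective_algebraMap_iff.mpr hbot)
  exact hdim (ringKrullDim_eq_of_ringEquiv e ▸ ringKrullDim_eq_zero_of_field k)

namespace HomogeneousIdeal

variable {k S : Type*} [Field k] [CommRing S] [Algebra k S] {𝒜 : ℕ → Submodule k S}
  [GradedAlgebra 𝒜]

theorem irrelevant_ne_top [Nontrivial S] : (irrelevant 𝒜).toIdeal ≠ ⊤ := by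
  rw [Ideal.ne_top_iff_one, toIdeal_irrelevant, RingHom.mem_ker, map_one]
  exact one_ne_zero

theorem toIdeal_le_irrelevant (h0 : 𝒜 0 = Submodule.span k {1}) {I : HomogeneousIdeal 𝒜}
    (hI : I.toIdeal ≠ ⊤) : I.toIdeal ≤ (irrelevant 𝒜).toIdeal := by
  intro a ha
  obtain ⟨c, hc⟩ :=
    Submodule.mem_span_singleton.mp (h0.le (SetLike.coe_mem (DirectSum.decompose 𝒜 a 0)))
  have hcI : algebraMap k S c ∈ I.toIdeal := by
    rw [Algebra.algebraMap_eq_smul_one, hc]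
    exact I.isHomogeneous 0 ha
  rw [mem_iff, mem_irrelevant_iff, GradedRing.proj_apply, ← hc]
  by_contra hc0
  have hc0 : c ≠ 0 := fun h => hc0 (by rw [h, zero_smul])
  exact hI (Ideal.eq_top_of_isUnit_mem _ hcI ((isUnit_iff_ne_zero.mpr hc0).map _))

theorem eq_irrelevant_of_isPrime [IsDomain S] [Ring.KrullDimLE 1 S]
    (h0 : 𝒜 0 = Submodule.span k {1}) {P : HomogeneousIdeal 𝒜} (hP : P.toIdeal.IsPrime)
    (hP0 : P.toIdeal ≠ ⊥) : P = irrelevant 𝒜 :=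
  HomogeneousIdeal.ext <| (hP.isMaximal_of_ne_bot hP0).eq_of_le irrelevant_ne_top
    (toIdeal_le_irrelevant h0 hP.ne_top)

end HomogeneousIdeal

namespace GradedAlgebra

variable {k S : Type*} [Field k] [CommRing S] [Algebra k S] {𝒜 : ℕ → Submodule k S}
  [GradedAlgebra 𝒜]

theorem exists_eq_smul_of_mem_one [IsAlgClosed k] [IsDomain S] [Algebra.FiniteType k S]
    [Ring.KrullDimLE 1 S] (h0 : 𝒜 0 = Submodule.span k {1}) {x y : S} (hx : x ∈ 𝒜 1)
    (hx0 : x ≠ 0) (hy : y ∈ 𝒜 1) : ∃ c : k, y = c • x := by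
  obtain ⟨φ, hφx⟩ := exists_algHom_apply_ne_zero (k := k) hx0
  refine ⟨φ y / φ x, ?_⟩
  by_contra hne
  set z := y - (φ y / φ x) • x
  have hφz : φ z = 0 := by simp [z, div_mul_cancel₀ _ hφx]
  have hzP : z ∈ ((RingHom.ker φ).homogeneousCore 𝒜).toIdeal :=
    Ideal.mem_homogeneousCore_of_homogeneous_of_mem
      ⟨1, Submodule.sub_mem _ hy (Submodule.smul_mem _ _ hx)⟩ hφz
  have hP := HomogeneousIdeal.eq_irrelevant_of_isPrime h0 (RingHom.ker_isPrime φ).homogeneousCore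
    (fun h => sub_ne_zero.mpr hne (by rwa [h, Ideal.mem_bot] at hzP))
  have hxP : x ∈ (RingHom.ker φ).homogeneousCore 𝒜 := by
    rw [hP]; exact HomogeneousIdeal.mem_irrelevant_of_mem 𝒜 one_pos hx
  exact hφx (Ideal.toIdeal_homogeneousCore_le 𝒜 _ hxP)

theorem proj_aeval {x : S} (hx : x ∈ 𝒜 1) (p : k[X]) (n : ℕ) :
    GradedRing.proj 𝒜 n (aeval x p) = p.coeff n • x ^ n := by
  have hmem (i : ℕ) : p.coeff i • x ^ i ∈ 𝒜 i :=
    Submodule.smul_mem _ _ (by simpa using SetLike.pow_mem_graded i hx)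
  rw [aeval_eq_sum_range, map_sum, Finset.sum_eq_single n]
  · exact DirectSum.decompose_of_mem_same 𝒜 (hmem n)
  · exact fun i _ hi => DirectSum.decompose_of_mem_ne 𝒜 (hmem i) hi
  · intro hn
    rw [coeff_eq_zero_of_natDegree_lt (by simpa using hn), zero_smul, map_zero]

theorem aeval_injective_of_not_isNilpotent {x : S} (hx : x ∈ 𝒜 1) (hnil : ¬IsNilpotent x) :
    Function.Injective (aeval (R := k) x) := by
  refine (injective_iff_map_eq_zero _).mpr fun p hp => Polynomial.ext fun n => ?_
  have := proj_aeval hx p n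
  rw [hp, map_zero, eq_comm, smul_eq_zero] at this
  exact this.resolve_right fun h => hnil ⟨n, h⟩

theorem eq_span_pow_of_adjoin_eq_top {x : S} (hx : x ∈ 𝒜 1) (htop : Algebra.adjoin k {x} = ⊤)
    (n : ℕ) : 𝒜 n = Submodule.span k {x ^ n} := by
  refine le_antisymm (fun a ha => ?_) ?_
  · obtain ⟨p, rfl⟩ := (AlgHom.mem_range _).mp
      (Algebra.adjoin_singleton_eq_range_aeval k x ▸ htop ▸ Algebra.mem_top : a ∈ _)
    rw [Submodule.mem_span_singleton]
    refine ⟨p.coeff n, ?_⟩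
    rw [← proj_aeval hx, GradedRing.proj_apply, DirectSum.decompose_of_mem_same 𝒜 ha]
  · rw [Submodule.span_le, Set.singleton_subset_iff]
    simpa using SetLike.pow_mem_graded n hx

theorem exists_algEquiv_polynomial_of_adjoin_eq_top {x : S} (hx : x ∈ 𝒜 1)
    (hnil : ¬IsNilpotent x) (htop : Algebra.adjoin k {x} = ⊤) :
    ∃ e : S ≃ₐ[k] k[X], ∀ n : ℕ, (𝒜 n).map e.toLinearMap = Submodule.span k {X ^ n} := by
  have hsurj : Function.Surjective (aeval (R := k) x) := by
    rw [← AlgHom.range_eq_top, ← Algebra.adjoin_singleton_eq_range_aeval, htop]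
  let e := AlgEquiv.ofBijective _ ⟨aeval_injective_of_not_isNilpotent hx hnil, hsurj⟩
  refine ⟨e.symm, fun n => ?_⟩
  rw [eq_span_pow_of_adjoin_eq_top hx htop, Submodule.map_span, Set.image_singleton,
    AlgEquiv.toLinearMap_apply, map_pow, (AlgEquiv.symm_apply_eq _).mpr (aeval_X x).symm]

end GradedAlgebra

/-- A standard ℕ-graded integral domain `S` of Krull dimension 1, finitely
generated over its degree-0 part `S₀ = k` (an algebraically closed field), is isomorphic
as a graded `k`-algebra to the polynomial ring `k[t]` with `t` of degree 1 (the degree-`n`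
component of `k[t]` being `k · tⁿ`). -/
theorem stmt_4 {k S : Type*} [Field k] [IsAlgClosed k] [CommRing S] [IsDomain S]
    [Algebra k S] (𝒜 : ℕ → Submodule k S) [GradedAlgebra 𝒜]
    (h0 : 𝒜 0 = Submodule.span k {1})
    (hstd : Algebra.adjoin k (𝒜 1 : Set S) = ⊤)
    (hft : Algebra.FiniteType k S)
    (hdim : ringKrullDim S = 1) :
    ∃ e : S ≃ₐ[k] Polynomial k,
      ∀ n : ℕ, (𝒜 n).map e.toLinearMap =
        Submodule.span k {(Polynomial.X : Polynomial k) ^ n} := by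
  have : Ring.KrullDimLE 1 S := Ring.krullDimLE_iff.mpr hdim.le
  obtain ⟨x, hx, hx0⟩ := exists_mem_ne_zero_of_adjoin_eq_top hstd (by simp [hdim])
  have h1 : 𝒜 1 = Submodule.span k {x} :=
    le_antisymm (fun y hy => Submodule.mem_span_singleton.mpr
        ((GradedAlgebra.exists_eq_smul_of_mem_one h0 hx hx0 hy).imp fun _ => Eq.symm))
      (Submodule.span_le.mpr (Set.singleton_subset_iff.mpr hx))
  refine GradedAlgebra.exists_algEquiv_polynomial_of_adjoin_eq_top hx
    (fun h => hx0 h.eq_zero) ?_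
  rw [← Algebra.adjoin_span, ← h1, hstd]
end

section
/- In the ring R := ℚ[x,y,z]/(x² + y² + z²), the image of x is a prime element. -/
/-!
Modulo `x`, the ring `ℚ[x,y,z]/(x² + y² + z²)` becomes `ℚ[y,z]/(y² + z²)`. Over `ℚ[z]`, `y² + z²`
is a monic quadratic in `y` without a root, since evaluating `r² = -z²` at `z = 1` would make `-1`
a rational square; so it is irreducible in the factorial ring `ℚ[z][y]`, hence prime, and the
quotient is a domain. Moreover `x ≠ 0` in `ℚ[x,y,z]/(x² + y² + z²)`, since a monic polynomial of
degree `2` cannot divide `x`.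
-/

open MvPolynomial

namespace Polynomial

variable {A : Type*} [CommRing A]

theorem isPrime_span_pair_X_of_isPrime_span_coeff_zero {f : A[X]}
    (hf : (Ideal.span {f.coeff 0}).IsPrime) : (Ideal.span {f, X}).IsPrime := by
  have := (Ideal.Quotient.isDomain_iff_prime _).mpr hf
  have hspan : Ideal.span {f, X} = Ideal.span {C (f.coeff 0), X - C 0} := by
    conv_lhs => rw [← X_mul_divX_add f, add_comm]
    rw [Ideal.span_pair_add_right_mul, C_0, sub_zero]
  rw [hspan, ← Ideal.Quotient.isDomain_iff_prime]
  exact MulEquiv.isDomain _ (quotientSpanCXSubCAlgEquiv (f.coeff 0) 0).toMulEquiv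

theorem prime_mk_X_of_isPrime_span_coeff_zero {f : A[X]} (hfX : ¬ f ∣ X)
    (hf : (Ideal.span {f.coeff 0}).IsPrime) : Prime (Ideal.Quotient.mk (Ideal.span {f}) X) := by
  have hX : Ideal.Quotient.mk (Ideal.span {f}) X ≠ 0 := by
    rwa [Ne, Ideal.Quotient.eq_zero_iff_mem, Ideal.mem_span_singleton]
  have := isPrime_span_pair_X_of_isPrime_span_coeff_zero hf
  have hker : RingHom.ker (Ideal.Quotient.mk (Ideal.span {f})) ≤ Ideal.span {f, X} := by
    rw [Ideal.mk_ker]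
    exact Ideal.span_mono (by simp)
  have hmap := Ideal.map_isPrime_of_surjective Ideal.Quotient.mk_surjective hker
  rw [Ideal.map_span, Set.image_pair, Ideal.Quotient.mk_singleton_self,
    Ideal.span_insert_zero] at hmap
  exact (Ideal.span_singleton_prime hX).mp hmap

theorem irreducible_X_sq_add_C [IsDomain A] {b : A} (hb : ¬ IsSquare (-b)) :
    Irreducible (X ^ 2 + C b) := by
  have hmonic : (X ^ 2 + C b).Monic := monic_X_pow_add_C _ two_ne_zero
  have hdeg : (X ^ 2 + C b).natDegree = 2 := natDegree_X_pow_add_C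
  rw [hmonic.irreducible_iff_roots_eq_zero_of_degree_le_three (by omega) (by omega),
    Multiset.eq_zero_iff_forall_notMem]
  intro r hr
  rw [mem_roots hmonic.ne_zero, IsRoot, eval_add, eval_pow, eval_X, eval_C] at hr
  exact hb ⟨r, by linear_combination -hr⟩

end Polynomial

theorem RingEquiv.prime_quotientMk_map_iff {R S : Type*} [CommRing R] [CommRing S] (e : R ≃+* S)
    {I : Ideal R} {x : R} :
    Prime (Ideal.Quotient.mk (I.map e) (e x)) ↔ Prime (Ideal.Quotient.mk I x) :=
  MulEquiv.prime_iff (p := Ideal.Quotient.mk I x) (Ideal.quotientEquiv I (I.map e) e rfl)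

namespace MvPolynomial

variable {K : Type*} [CommRing K] [LinearOrder K] [IsStrictOrderedRing K]

theorem not_isSquare_neg_X_sq {σ : Type*} (i : σ) :
    ¬ IsSquare (-(X i ^ 2 : MvPolynomial σ K)) := by
  rintro ⟨r, hr⟩
  have h := congrArg (eval fun _ => (1 : K)) hr
  simp only [map_neg, map_pow, map_mul, eval_X, one_pow] at h
  nlinarith [mul_self_nonneg (eval (fun _ => (1 : K)) r)]

variable [UniqueFactorizationMonoid K]

theorem prime_X_zero_sq_add_X_one_sq : Prime (X 0 ^ 2 + X 1 ^ 2 : MvPolynomial (Fin 2) K) := by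
  have h : finSuccEquiv K 1 (X 0 ^ 2 + X 1 ^ 2) = .X ^ 2 + .C (X 0 ^ 2) := by
    have h1 : (X 1 : MvPolynomial (Fin 2) K) = X (Fin.succ 0) := rfl
    simp [h1, finSuccEquiv_X_zero, finSuccEquiv_X_succ]
  rw [← MulEquiv.prime_iff (finSuccEquiv K 1).toMulEquiv]
  change Prime (finSuccEquiv K 1 _)
  rw [h, ← UniqueFactorizationMonoid.irreducible_iff_prime]
  exact Polynomial.irreducible_X_sq_add_C (not_isSquare_neg_X_sq 0)

theorem prime_mk_X_zero_span_sum_sq :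
    Prime (Ideal.Quotient.mk (Ideal.span {(X 0 ^ 2 + X 1 ^ 2 + X 2 ^ 2 : MvPolynomial (Fin 3) K)})
      (X 0)) := by
  set f : Polynomial (MvPolynomial (Fin 2) K) := .X ^ 2 + .C (X 0 ^ 2 + X 1 ^ 2)
  have hI : (Ideal.span {X 0 ^ 2 + X 1 ^ 2 + X 2 ^ 2}).map (finSuccEquiv K 2).toRingEquiv =
      Ideal.span {f} := by
    have h1 : (X 1 : MvPolynomial (Fin 3) K) = X (Fin.succ 0) := rfl
    have h2 : (X 2 : MvPolynomial (Fin 3) K) = X (Fin.succ 1) := rfl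
    rw [Ideal.map_span, Set.image_singleton]
    simp [f, add_assoc, h1, h2, finSuccEquiv_X_zero, finSuccEquiv_X_succ]
  have hX : (finSuccEquiv K 2).toRingEquiv (X 0) = .X := finSuccEquiv_X_zero
  refine (RingEquiv.prime_quotientMk_map_iff (finSuccEquiv K 2).toRingEquiv).mp ?_
  rw [hI, hX]
  refine Polynomial.prime_mk_X_of_isPrime_span_coeff_zero (fun hdvd => ?_) ?_
  · have := Polynomial.natDegree_le_of_dvd hdvd Polynomial.X_ne_zero
    rw [Polynomial.natDegree_X_pow_add_C, Polynomial.natDegree_X] at this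
    omega
  · have h0 : f.coeff 0 = X 0 ^ 2 + X 1 ^ 2 := by
      rw [Polynomial.coeff_add, Polynomial.coeff_C_zero, Polynomial.coeff_X_pow]
      simp
    rw [h0, Ideal.span_singleton_prime prime_X_zero_sq_add_X_one_sq.ne_zero]
    exact prime_X_zero_sq_add_X_one_sq

end MvPolynomial

/-- In `ℚ[x,y,z]/(x² + y² + z²)` the image of `x` is a prime element. -/
theorem stmt_5 :
    Prime (Ideal.Quotient.mk
      (Ideal.span {(X 0 ^ 2 + X 1 ^ 2 + X 2 ^ 2 : MvPolynomial (Fin 3) ℚ)})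
      (X 0)) :=
  prime_mk_X_zero_span_sum_sq
end

section
/- Let a, b be positive integers with gcd(a,b) = 1, b even, and 2a > b. Let R := ℂ[x,y,z]/(x² − yz) and let φ : R → ℂ[t] be the ℂ-algebra homomorphism induced by x ↦ t^a, y ↦ t^b, z ↦ t^{2a−b}. Then the kernel of φ is the principal ideal of R generated by y^{a−b/2} − z^{b/2}; in particular, y^{a−b/2} − z^{b/2} is a prime element of R. -/
open MvPolynomial

private noncomputable def PhiCM (c m : ℕ) : MvPolynomial (Fin 3) ℂ →ₐ[ℂ] Polynomial ℂ :=
  aeval ![Polynomial.X ^ (m + c), Polynomial.X ^ (2 * c), Polynomial.X ^ (2 * m)]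

private noncomputable def Jcm (c m : ℕ) : Ideal (MvPolynomial (Fin 3) ℂ) :=
  Ideal.span {X 0 ^ 2 - X 1 * X 2, X 1 ^ m - X 2 ^ c}

private def Ecm (c m : ℕ) (d : Fin 3 →₀ ℕ) : ℕ := (m+c)*(d 0) + 2*(c*(d 1)) + 2*(m*(d 2))

private lemma phiX0 (c m : ℕ) : PhiCM c m (X 0) = Polynomial.X^(m+c) := by simp [PhiCM]
private lemma phiX1 (c m : ℕ) : PhiCM c m (X 1) = Polynomial.X^(2*c) := by simp [PhiCM]
private lemma phiX2 (c m : ℕ) : PhiCM c m (X 2) = Polynomial.X^(2*m) := by simp [PhiCM]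

private lemma mon_eq (d : Fin 3 →₀ ℕ) (r : ℂ) :
    (monomial d r : MvPolynomial (Fin 3) ℂ) = C r * X 0 ^ (d 0) * X 1 ^ (d 1) * X 2 ^ (d 2) := by
  rw [monomial_eq, Finsupp.prod_fintype _ _ (fun i => pow_zero _), Fin.prod_univ_three]
  ring

private lemma phi_XXX (c m k i j : ℕ) (r : ℂ) :
    PhiCM c m (C r * X 0 ^ k * X 1 ^ i * X 2 ^ j)
      = Polynomial.C r * Polynomial.X ^ ((m+c)*k + 2*(c*i) + 2*(m*j)) := by
  rw [map_mul, map_mul, map_mul, map_pow, map_pow, map_pow, phiX0, phiX1, phiX2]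
  have hC : PhiCM c m (C r) = Polynomial.C r := by
    simp [PhiCM, algebraMap_eq]
  rw [hC, ← pow_mul, ← pow_mul, ← pow_mul, mul_assoc, mul_assoc, ← pow_add, ← pow_add]
  congr 1
  ring

private lemma phi_mon (c m : ℕ) (d : Fin 3 →₀ ℕ) (r : ℂ) :
    PhiCM c m (monomial d r) = Polynomial.C r * Polynomial.X ^ (Ecm c m d) := by
  rw [mon_eq, phi_XXX]; rfl

private lemma einj (c m : ℕ) (hm : 0 < m) (hodd : (m + c) % 2 = 1) (hcop : Nat.Coprime m c)
    (k k' i i' j j' : ℕ) (hk : k < 2) (hk' : k' < 2) (hi : i < m) (hi' : i' < m)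
    (h : (m+c)*k + 2*(c*i) + 2*(m*j) = (m+c)*k' + 2*(c*i') + 2*(m*j')) :
    k = k' ∧ i = i' ∧ j = j' := by
  have hkk : k = k' := by
    have h1 := h
    generalize c*i = A at h1
    generalize c*i' = A' at h1
    generalize m*j = B at h1
    generalize m*j' = B' at h1
    generalize hM : m + c = M at h1 hodd
    interval_cases k <;> interval_cases k' <;> omega
  subst hkk
  have h2 : c*i + m*j = c*i' + m*j' := by linarith
  have h2' : (c:ℤ)*i + (m:ℤ)*j = (c:ℤ)*i' + (m:ℤ)*j' := by exact_mod_cast h2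
  have hco : IsCoprime (m:ℤ) (c:ℤ) := Nat.isCoprime_iff_coprime.mpr hcop
  have hdvd2 : (m:ℤ) ∣ ((i:ℤ) - i') * (c:ℤ) := ⟨(j':ℤ) - j, by linear_combination h2'⟩
  have hdvd : (m:ℤ) ∣ ((i:ℤ) - i') := hco.dvd_of_dvd_mul_right hdvd2
  have habs : |(i:ℤ) - i'| < (m:ℤ) := by
    rw [abs_lt]; constructor <;> [omega; omega]
  have hii : (i:ℤ) - i' = 0 := Int.eq_zero_of_abs_lt_dvd hdvd habs
  have hi2 : i = i' := by omega
  subst hi2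
  refine ⟨rfl, rfl, ?_⟩
  have h3 : m*j = m*j' := by omega
  exact Nat.eq_of_mul_eq_mul_left hm h3

private lemma injC (c m : ℕ) (hm : 0 < m) (hodd : (m+c) % 2 = 1) (hcop : Nat.Coprime m c)
    (g : MvPolynomial (Fin 3) ℂ) (hs : ∀ d ∈ g.support, d 0 < 2 ∧ d 1 < m)
    (hg : PhiCM c m g = 0) : g = 0 := by
  by_contra hne
  obtain ⟨ν, hν⟩ := (MvPolynomial.support_nonempty.mpr hne)
  have hrep : PhiCM c m g
      = ∑ d ∈ g.support, Polynomial.C (coeff d g) * Polynomial.X ^ (Ecm c m d) := by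
    conv_lhs => rw [← support_sum_monomial_coeff g]
    rw [map_sum]
    exact Finset.sum_congr rfl fun d _ => phi_mon c m d (coeff d g)
  rw [hrep] at hg
  have h2 := congrArg (fun p => Polynomial.coeff p (Ecm c m ν)) hg
  simp only [Polynomial.finset_sum_coeff, Polynomial.coeff_zero, Polynomial.coeff_C_mul,
    Polynomial.coeff_X_pow] at h2
  rw [Finset.sum_eq_single_of_mem ν hν] at h2
  · rw [if_pos rfl, mul_one] at h2
    exact (mem_support_iff.mp hν) h2
  · intro d hd hdν
    rw [if_neg, mul_zero]
    intro hE
    obtain ⟨e0, e1, e2⟩ := einj c m hm hodd hcop (d 0) (ν 0) (d 1) (ν 1) (d 2) (ν 2)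
      (hs d hd).1 (hs ν hν).1 (hs d hd).2 (hs ν hν).2 hE.symm
    apply hdν
    apply Finsupp.ext
    intro x
    fin_cases x <;> assumption

private lemma red1 (k : ℕ) : ∀ i j : ℕ, (X 0 ^ k * X 1 ^ i * X 2 ^ j
    - X 0 ^ (k % 2) * X 1 ^ (i + k / 2) * X 2 ^ (j + k / 2) : MvPolynomial (Fin 3) ℂ)
    ∈ Ideal.span {(X 0 ^ 2 - X 1 * X 2 : MvPolynomial (Fin 3) ℂ)} := by
  induction k using Nat.strong_induction_on with
  | _ k ih =>
    intro i j
    rcases k with _ | _ | n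
    · simp
    · simp
    · have h2 := ih n (by omega) (i+1) (j+1)
      have e1 : (n+2) % 2 = n % 2 := by omega
      have e2 : i + (n+2)/2 = (i+1) + n/2 := by omega
      have e3 : j + (n+2)/2 = (j+1) + n/2 := by omega
      rw [e1, e2, e3]
      have h4 : (X 0 ^ (n+2) * X 1 ^ i * X 2 ^ j
          - X 0 ^ n * X 1 ^ (i+1) * X 2 ^ (j+1) : MvPolynomial (Fin 3) ℂ)
          ∈ Ideal.span {(X 0 ^ 2 - X 1 * X 2 : MvPolynomial (Fin 3) ℂ)} := by
        have h1 : (X 0 ^ (n+2) * X 1 ^ i * X 2 ^ j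
            - X 0 ^ n * X 1 ^ (i+1) * X 2 ^ (j+1) : MvPolynomial (Fin 3) ℂ)
            = (X 0 ^ n * X 1 ^ i * X 2 ^ j) * (X 0 ^ 2 - X 1 * X 2) := by ring
        rw [h1]
        exact Ideal.mul_mem_left _ _ (Ideal.subset_span (Set.mem_singleton _))
      have h5 := Ideal.add_mem _ h4 h2
      have h6 : (X 0 ^ (n+2) * X 1 ^ i * X 2 ^ j
          - X 0 ^ (n % 2) * X 1 ^ (i + 1 + n / 2) * X 2 ^ (j + 1 + n / 2) : MvPolynomial (Fin 3) ℂ)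
          = (X 0 ^ (n+2) * X 1 ^ i * X 2 ^ j - X 0 ^ n * X 1 ^ (i+1) * X 2 ^ (j+1))
            + (X 0 ^ n * X 1 ^ (i+1) * X 2 ^ (j+1)
              - X 0 ^ (n % 2) * X 1 ^ (i + 1 + n / 2) * X 2 ^ (j + 1 + n / 2)) := by ring
      rw [h6]
      exact h5

private lemma red2 (c m : ℕ) (hm : 0 < m) (i : ℕ) : ∀ j : ℕ, (X 1 ^ i * X 2 ^ j
    - X 1 ^ (i % m) * X 2 ^ (j + c * (i / m)) : MvPolynomial (Fin 3) ℂ)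
    ∈ Ideal.span {(X 1 ^ m - X 2 ^ c : MvPolynomial (Fin 3) ℂ)} := by
  induction i using Nat.strong_induction_on with
  | _ i ih =>
    intro j
    by_cases h : i < m
    · rw [Nat.mod_eq_of_lt h, Nat.div_eq_of_lt h]
      simp
    · push_neg at h
      obtain ⟨i0, rfl⟩ : ∃ i0, i = m + i0 := ⟨i - m, by omega⟩
      have h2 := ih i0 (by omega) (j + c)
      have hd : (m + i0)/m = i0/m + 1 := by
        rw [Nat.add_comm]; exact Nat.add_div_right i0 hm
      have e1 : (m + i0) % m = i0 % m := Nat.add_mod_left m i0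
      have e2 : j + c * ((m+i0)/m) = (j + c) + c * (i0/m) := by rw [hd]; ring
      rw [e1, e2]
      have h4 : (X 1 ^ (m + i0) * X 2 ^ j - X 1 ^ i0 * X 2 ^ (j + c) : MvPolynomial (Fin 3) ℂ)
          ∈ Ideal.span {(X 1 ^ m - X 2 ^ c : MvPolynomial (Fin 3) ℂ)} := by
        have h1 : (X 1 ^ (m + i0) * X 2 ^ j - X 1 ^ i0 * X 2 ^ (j + c) : MvPolynomial (Fin 3) ℂ)
            = (X 1 ^ i0 * X 2 ^ j) * (X 1 ^ m - X 2 ^ c) := by ring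
        rw [h1]
        exact Ideal.mul_mem_left _ _ (Ideal.subset_span (Set.mem_singleton _))
      have h6 : (X 1 ^ (m + i0) * X 2 ^ j
          - X 1 ^ (i0 % m) * X 2 ^ (j + c + c * (i0 / m)) : MvPolynomial (Fin 3) ℂ)
          = (X 1 ^ (m + i0) * X 2 ^ j - X 1 ^ i0 * X 2 ^ (j + c))
            + (X 1 ^ i0 * X 2 ^ (j + c) - X 1 ^ (i0 % m) * X 2 ^ (j + c + c * (i0 / m))) := by ring
      rw [h6]
      exact Ideal.add_mem _ h4 h2

private lemma redJ (c m : ℕ) (hm : 0 < m) (k i j : ℕ) :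
    (X 0 ^ k * X 1 ^ i * X 2 ^ j
      - X 0 ^ (k % 2) * X 1 ^ ((i + k/2) % m) * X 2 ^ ((j + k/2) + c * ((i + k/2)/m))
      : MvPolynomial (Fin 3) ℂ) ∈ Jcm c m := by
  have h1 : (X 0 ^ k * X 1 ^ i * X 2 ^ j
      - X 0 ^ (k % 2) * X 1 ^ (i + k / 2) * X 2 ^ (j + k / 2) : MvPolynomial (Fin 3) ℂ) ∈ Jcm c m :=
    Ideal.span_mono (Set.singleton_subset_iff.mpr (Set.mem_insert _ _)) (red1 k i j)
  have h2 : (X 0 ^ (k % 2) * (X 1 ^ (i + k/2) * X 2 ^ (j + k/2)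
      - X 1 ^ ((i + k/2) % m) * X 2 ^ ((j + k/2) + c * ((i + k/2)/m))) : MvPolynomial (Fin 3) ℂ)
      ∈ Jcm c m :=
    Ideal.mul_mem_left _ _
      (Ideal.span_mono (Set.singleton_subset_iff.mpr (Set.mem_insert_of_mem _ (Set.mem_singleton _)))
        (red2 c m hm (i + k/2) (j + k/2)))
  have h6 : (X 0 ^ k * X 1 ^ i * X 2 ^ j
      - X 0 ^ (k % 2) * X 1 ^ ((i + k/2) % m) * X 2 ^ ((j + k/2) + c * ((i + k/2)/m))
      : MvPolynomial (Fin 3) ℂ)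
      = (X 0 ^ k * X 1 ^ i * X 2 ^ j
        - X 0 ^ (k % 2) * X 1 ^ (i + k / 2) * X 2 ^ (j + k / 2))
        + (X 0 ^ (k % 2) * (X 1 ^ (i + k/2) * X 2 ^ (j + k/2)
          - X 1 ^ ((i + k/2) % m) * X 2 ^ ((j + k/2) + c * ((i + k/2)/m)))) := by ring
  rw [h6]
  exact Ideal.add_mem _ h1 h2

private lemma phi_p1 (c m : ℕ) : PhiCM c m (X 0 ^ 2 - X 1 * X 2) = 0 := by
  rw [map_sub, map_mul, map_pow, phiX0, phiX1, phiX2, ← pow_mul, ← pow_add, sub_eq_zero]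
  congr 1
  ring

private lemma phi_p2 (c m : ℕ) : PhiCM c m (X 1 ^ m - X 2 ^ c) = 0 := by
  rw [map_sub, map_pow, map_pow, phiX1, phiX2, ← pow_mul, ← pow_mul, sub_eq_zero]
  congr 1
  ring

private lemma Jker (c m : ℕ) (p : MvPolynomial (Fin 3) ℂ) (hp : p ∈ Jcm c m) :
    PhiCM c m p = 0 := by
  have hle : Jcm c m ≤ RingHom.ker (PhiCM c m) := by
    rw [Jcm, Ideal.span_le]
    rintro q hq
    simp only [Set.mem_insert_iff, Set.mem_singleton_iff] at hq
    rcases hq with rfl | rfl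
    · exact phi_p1 c m
    · exact phi_p2 c m
  exact hle hp

private lemma ker_sub (c m : ℕ) (hm : 0 < m) (hodd : (m+c) % 2 = 1) (hcop : Nat.Coprime m c)
    (f : MvPolynomial (Fin 3) ℂ) (hf : PhiCM c m f = 0) : f ∈ Jcm c m := by
  classical
  set nk : (Fin 3 →₀ ℕ) → ℕ := fun d => (d 0) % 2 with hnk
  set ni : (Fin 3 →₀ ℕ) → ℕ := fun d => (d 1 + (d 0)/2) % m with hni
  set nj : (Fin 3 →₀ ℕ) → ℕ := fun d => (d 2 + (d 0)/2) + c * ((d 1 + (d 0)/2)/m) with hnj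
  set N : (Fin 3 →₀ ℕ) → (Fin 3 →₀ ℕ) := fun d =>
    Finsupp.single 0 (nk d) + Finsupp.single 1 (ni d) + Finsupp.single 2 (nj d) with hN
  have hN0 : ∀ d, (N d) 0 = nk d := by
    intro d; simp [hN, Finsupp.single_apply]
  have hN1 : ∀ d, (N d) 1 = ni d := by
    intro d; simp [hN, Finsupp.single_apply]
  have hN2 : ∀ d, (N d) 2 = nj d := by
    intro d; simp [hN, Finsupp.single_apply]
  set g := ∑ d ∈ f.support, monomial (N d) (coeff d f) with hg
  have hfg : f - g ∈ Jcm c m := by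
    have hrepr : f - g = ∑ d ∈ f.support,
        (monomial d (coeff d f) - monomial (N d) (coeff d f)) := by
      rw [Finset.sum_sub_distrib, support_sum_monomial_coeff]
    rw [hrepr]
    apply Ideal.sum_mem
    intro d hd
    have heq : monomial d (coeff d f) - monomial (N d) (coeff d f)
        = C (coeff d f) * (X 0 ^ (d 0) * X 1 ^ (d 1) * X 2 ^ (d 2)
          - X 0 ^ (nk d) * X 1 ^ (ni d) * X 2 ^ (nj d)) := by
      rw [mon_eq, mon_eq, hN0, hN1, hN2]; ring
    rw [heq]
    exact Ideal.mul_mem_left _ _ (redJ c m hm (d 0) (d 1) (d 2))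
  have hgz : PhiCM c m g = 0 := by
    have h1 := Jker c m _ hfg
    rw [map_sub, hf, zero_sub, neg_eq_zero] at h1
    exact h1
  have hgsupp : ∀ d ∈ g.support, d 0 < 2 ∧ d 1 < m := by
    intro d hd
    have hcd : coeff d g ≠ 0 := mem_support_iff.mp hd
    rw [hg, coeff_sum] at hcd
    obtain ⟨e, he, hne⟩ := Finset.exists_ne_zero_of_sum_ne_zero hcd
    have hdN : d = N e := by
      by_contra hdd
      rw [coeff_monomial, if_neg fun h => hdd h.symm] at hne
      exact hne rfl
    subst hdN
    refine ⟨?_, ?_⟩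
    · rw [hN0]; exact Nat.mod_lt _ (by norm_num)
    · rw [hN1]; exact Nat.mod_lt _ hm
  have hg0 : g = 0 := injC c m hm hodd hcop g hgsupp hgz
  rw [hg0, sub_zero] at hfg
  exact hfg

/-- Let `a, b` be positive integers with `gcd(a,b) = 1`, `b` even and
`2a > b`, let `R = ℂ[x,y,z]/(x² − yz)` and let `φ : R → ℂ[t]` be the ℂ-algebra
homomorphism with `x ↦ tᵃ`, `y ↦ tᵇ`, `z ↦ t^{2a−b}` (any ℂ-algebra map with these
values on the generators is the induced one).  Then `ker φ` is the principal ideal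
generated by `y^{a−b/2} − z^{b/2}`; in particular this element is prime in `R`. -/
theorem stmt_7 (a b : ℕ) (ha : 0 < a) (hb : 0 < b) (hab : Nat.gcd a b = 1)
    (hbeven : 2 ∣ b) (hba : b < 2 * a)
    (I : Ideal (MvPolynomial (Fin 3) ℂ))
    (hI : I = Ideal.span {(X 0 ^ 2 - X 1 * X 2 : MvPolynomial (Fin 3) ℂ)})
    (φ : (MvPolynomial (Fin 3) ℂ ⧸ I) →ₐ[ℂ] Polynomial ℂ)
    (hφx : φ (Ideal.Quotient.mk I (X 0)) = Polynomial.X ^ a)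
    (hφy : φ (Ideal.Quotient.mk I (X 1)) = Polynomial.X ^ b)
    (hφz : φ (Ideal.Quotient.mk I (X 2)) = Polynomial.X ^ (2 * a - b)) :
    RingHom.ker φ =
      Ideal.span {Ideal.Quotient.mk I (X 1 ^ (a - b / 2) - X 2 ^ (b / 2))} ∧
    Prime (Ideal.Quotient.mk I (X 1 ^ (a - b / 2) - X 2 ^ (b / 2))) := by
  obtain ⟨c, rfl⟩ := hbeven
  set m := a - c with hm'
  have hc : 0 < c := by omega
  have hm : 0 < m := by omega
  have ha' : a = m + c := by omega
  have haodd : ¬ (2 ∣ a) := by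
    intro h2a
    have : 2 ∣ Nat.gcd a (2*c) := Nat.dvd_gcd h2a ⟨c, rfl⟩
    omega
  have hodd : (m + c) % 2 = 1 := by omega
  have hcop : Nat.Coprime m c := by
    have h2 : Nat.Coprime a c := Nat.Coprime.coprime_dvd_right ⟨2, by ring⟩ hab
    have h3 : Nat.Coprime (m + c) c := by rwa [← ha']
    exact Nat.coprime_add_self_left.mp h3
  have e1 : a - 2*c/2 = m := by omega
  have e2 : 2*c/2 = c := by omega
  rw [e1, e2]
  have hcomp : ∀ p : MvPolynomial (Fin 3) ℂ,
      φ (Ideal.Quotient.mk I p) = PhiCM c m p := by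
    have heq : φ.comp (Ideal.Quotient.mkₐ ℂ I) = PhiCM c m := by
      apply MvPolynomial.algHom_ext
      intro i
      fin_cases i
      · simp only [AlgHom.comp_apply, Ideal.Quotient.mkₐ_eq_mk, Fin.isValue]
        rw [show ((⟨0, by omega⟩ : Fin 3)) = 0 from rfl, hφx, phiX0]
        congr 1 <;> omega
      · simp only [AlgHom.comp_apply, Ideal.Quotient.mkₐ_eq_mk, Fin.isValue]
        rw [show ((⟨1, by omega⟩ : Fin 3)) = 1 from rfl, hφy, phiX1]
      · simp only [AlgHom.comp_apply, Ideal.Quotient.mkₐ_eq_mk, Fin.isValue]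
        rw [show ((⟨2, by omega⟩ : Fin 3)) = 2 from rfl, hφz, phiX2]
        congr 1 <;> omega
    intro p
    have := DFunLike.congr_fun heq p
    simpa using this
  have hmkp1 : Ideal.Quotient.mk I (X 0^2 - X 1 * X 2 : MvPolynomial (Fin 3) ℂ) = 0 := by
    rw [Ideal.Quotient.eq_zero_iff_mem, hI]
    exact Ideal.subset_span (Set.mem_singleton _)
  have hker : RingHom.ker φ
      = Ideal.span {Ideal.Quotient.mk I (X 1 ^ m - X 2 ^ c)} := by
    apply le_antisymm
    · intro x hx
      obtain ⟨p, rfl⟩ := Ideal.Quotient.mk_surjective x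
      have hp0 : PhiCM c m p = 0 := by
        rw [← hcomp]; exact hx
      have hpJ : p ∈ Jcm c m := ker_sub c m hm hodd hcop p hp0
      rw [Jcm] at hpJ
      obtain ⟨u, v, huv⟩ := Ideal.mem_span_pair.mp hpJ
      rw [← huv, map_add, map_mul, map_mul, hmkp1, mul_zero, zero_add]
      exact Ideal.mem_span_singleton.mpr (Dvd.intro_left _ rfl)
    · rw [Ideal.span_le, Set.singleton_subset_iff]
      show φ _ = 0
      rw [hcomp]
      exact phi_p2 c m
  have hne : Ideal.Quotient.mk I ((X 1 ^ m - X 2 ^ c : MvPolynomial (Fin 3) ℂ)) ≠ 0 := by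
    rw [Ne, Ideal.Quotient.eq_zero_iff_mem, hI, Ideal.mem_span_singleton]
    rintro ⟨u, hu⟩
    have := congrArg (MvPolynomial.eval ![(0:ℂ), 1, 0]) hu
    simp [zero_pow hc.ne', zero_pow (two_ne_zero)] at this
  refine ⟨hker, ?_⟩
  have hpr : (Ideal.span {Ideal.Quotient.mk I (X 1 ^ m - X 2 ^ c)}).IsPrime :=
    hker ▸ RingHom.ker_isPrime φ
  exact (Ideal.span_singleton_prime hne).mp hpr
end

section
/- Let ℂ(u,v) be the field of rational functions in two variables over ℂ, and let T be an indeterminate over ℂ(u,v). Let A be the ℂ-subalgebra of ℂ(u,v)[T] generated by w := (v²/u²)T³, x := (v³/u³)T⁵, y := (v⁴/u⁴)T⁷, and z := (v⁵/u⁵)T⁷. Then the kernel of the ℂ-algebra homomorphism ℂ[W,X,Y,Z] → A sending W ↦ w, X ↦ x, Y ↦ y, Z ↦ z is generated by the three 2×2 minors of the matrix [[W, X, Z], [X, Y, W³]], namely WY − X², W⁴ − XZ, and XW³ − YZ. -/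
set_option synthInstance.maxHeartbeats 1000000
set_option maxHeartbeats 1000000

noncomputable section

/-- The field `ℂ(u,v)` of rational functions in two variables over `ℂ`. -/
abbrev RatFuncField : Type := FractionRing (MvPolynomial (Fin 2) ℂ)

/-- The image of `u` in `ℂ(u,v)`. -/
def uu : RatFuncField := algebraMap (MvPolynomial (Fin 2) ℂ) RatFuncField (MvPolynomial.X 0)

/-- The image of `v` in `ℂ(u,v)`. -/
def vv : RatFuncField := algebraMap (MvPolynomial (Fin 2) ℂ) RatFuncField (MvPolynomial.X 1)

/-- `w = (v²/u²)T³` in `ℂ(u,v)[T]`. -/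
def w15 : Polynomial RatFuncField := Polynomial.C (vv ^ 2 / uu ^ 2) * Polynomial.X ^ 3

/-- `x = (v³/u³)T⁵`. -/
def x15 : Polynomial RatFuncField := Polynomial.C (vv ^ 3 / uu ^ 3) * Polynomial.X ^ 5

/-- `y = (v⁴/u⁴)T⁷`. -/
def y15 : Polynomial RatFuncField := Polynomial.C (vv ^ 4 / uu ^ 4) * Polynomial.X ^ 7

/-- `z = (v⁵/u⁵)T⁷`. -/
def z15 : Polynomial RatFuncField := Polynomial.C (vv ^ 5 / uu ^ 5) * Polynomial.X ^ 7

/-- The ℂ-subalgebra `A` of `ℂ(u,v)[T]` generated by `w, x, y, z`. -/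
def A15 : Subalgebra ℂ (Polynomial RatFuncField) :=
  Algebra.adjoin ℂ {w15, x15, y15, z15}

/-! ### Auxiliary material -/

open MvPolynomial

/-- `c = v/u`. -/
def cc : RatFuncField := vv / uu

/-- The algebra map from `ℂ[u,v]` to its fraction field as an `AlgHom`. -/
def ι2 : MvPolynomial (Fin 2) ℂ →ₐ[ℂ] RatFuncField :=
  IsScalarTower.toAlgHom ℂ (MvPolynomial (Fin 2) ℂ) RatFuncField

lemma ι2_inj : Function.Injective ι2 := IsFractionRing.injective _ _

lemma uu_ne : uu ≠ 0 := by
  have : uu = ι2 (X 0) := rfl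
  rw [this, Ne, map_eq_zero_iff _ ι2_inj]
  exact X_ne_zero 0

/-- Powers of `c = v/u` are linearly independent over `ℂ`. -/
lemma cpow_li : LinearIndependent ℂ (fun α : ℕ => cc ^ α) := by
  rw [linearIndependent_iff']
  intro s f h α₀ hα₀
  set N := s.sup id with hN
  have hle : ∀ α ∈ s, α ≤ N := fun a ha => Finset.le_sup (f := id) ha
  have key : ∀ α ∈ s, cc ^ α * uu ^ N = vv ^ α * uu ^ (N - α) := by
    intro α hα
    rw [cc, div_pow, div_mul_eq_mul_div, mul_div_assoc,
      pow_sub₀ uu uu_ne (hle α hα), div_eq_mul_inv]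
  have h2 : ∑ α ∈ s, f α • (vv ^ α * uu ^ (N - α)) = 0 := by
    have := congrArg (· * uu ^ N) h
    simp only [Finset.sum_mul, smul_mul_assoc, zero_mul] at this
    rw [← this]
    exact Finset.sum_congr rfl fun α hα => by rw [key α hα]
  set P : MvPolynomial (Fin 2) ℂ := ∑ α ∈ s, f α • (X 1 ^ α * X 0 ^ (N - α)) with hP
  have hPz : P = 0 := by
    apply ι2_inj
    rw [map_zero, hP, map_sum, ← h2]
    exact Finset.sum_congr rfl fun α hα => by
      rw [map_smul, map_mul, map_pow, map_pow]; rfl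
  have hc := congrArg
    (coeff (Finsupp.single (1 : Fin 2) α₀ + Finsupp.single (0 : Fin 2) (N - α₀))) hPz
  rw [hP, coeff_zero] at hc
  rw [coeff_sum] at hc
  have hterm : ∀ α ∈ s,
      coeff (Finsupp.single (1 : Fin 2) α₀ + Finsupp.single (0 : Fin 2) (N - α₀))
          (f α • (X 1 ^ α * X 0 ^ (N - α)))
        = if α = α₀ then f α else 0 := by
    intro α hα
    rw [coeff_smul, X_pow_eq_monomial, X_pow_eq_monomial, monomial_mul, mul_one,
      coeff_monomial]
    by_cases hh : α = α₀
    · subst hh; simp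
    · rw [if_neg, if_neg hh, smul_zero]
      intro hcon
      apply hh
      have := DFunLike.congr_fun hcon 1
      simpa using this
  have hc2 := (Finset.sum_congr rfl hterm).symm.trans hc
  rw [Finset.sum_ite_eq' s α₀ f, if_pos hα₀] at hc2
  exact hc2

/-- The family `(α, β) ↦ c^α T^β` in `ℂ(u,v)[T]`. -/
def gfam : ℕ × ℕ → Polynomial RatFuncField := fun p =>
  Polynomial.C (cc ^ p.1) * Polynomial.X ^ p.2

lemma gfam_li : LinearIndependent ℂ gfam := by
  refine linearIndependent_iff'.2 fun s f h p₀ hp₀ => ?_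
  set β₀ := p₀.2 with hβ₀
  have hc : ∑ p ∈ s, f p • Polynomial.coeff (gfam p) β₀ = 0 := by
    have := congrArg (fun q => Polynomial.coeff q β₀) h
    simpa [Polynomial.finset_sum_coeff] using this
  have hterm : ∀ p ∈ s, f p • Polynomial.coeff (gfam p) β₀
      = if β₀ = p.2 then f p • cc ^ p.1 else 0 := by
    intro p hp
    rw [gfam, Polynomial.coeff_C_mul, Polynomial.coeff_X_pow]
    by_cases hh : β₀ = p.2
    · rw [if_pos hh, if_pos hh, mul_one]
    · rw [if_neg hh, if_neg hh, mul_zero]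
      exact smul_zero (M := ℂ) (A := RatFuncField) (f p)
  have hc2 := (Finset.sum_congr rfl hterm).symm.trans hc
  rw [Finset.sum_ite, Finset.sum_const_zero, add_zero] at hc2
  set t := (s.filter (fun p => β₀ = p.2)).image Prod.fst with ht
  have hinj : Set.InjOn Prod.fst
      ((s.filter (fun p => β₀ = p.2) : Finset (ℕ × ℕ)) : Set (ℕ × ℕ)) := by
    intro p hp q hq hpq
    simp only [Finset.coe_filter, Set.mem_setOf_eq] at hp hq
    exact Prod.ext hpq (hp.2.symm.trans hq.2)
  have hsum : ∑ α ∈ t, f (α, β₀) • cc ^ α = 0 := by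
    rw [ht, Finset.sum_image hinj]
    rw [← hc2]
    refine Finset.sum_congr rfl fun p hp => ?_
    simp only [Finset.mem_filter] at hp
    rw [show (p.1, β₀) = p from Prod.ext rfl hp.2]
  have := linearIndependent_iff'.1 cpow_li t (fun α => f (α, β₀)) hsum p₀.1 ?_
  · rw [show (p₀.1, β₀) = p₀ from Prod.ext rfl rfl] at this
    exact this
  · rw [ht]
    exact Finset.mem_image_of_mem _ (Finset.mem_filter.2 ⟨hp₀, rfl⟩)

/-- The target algebra homomorphism into the full polynomial ring. -/
def φ15 : MvPolynomial (Fin 4) ℂ →ₐ[ℂ] Polynomial RatFuncField :=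
  aeval ![w15, x15, y15, z15]

lemma w_eq : w15 = Polynomial.C (cc ^ 2) * Polynomial.X ^ 3 := by rw [w15, cc, div_pow]
lemma x_eq : x15 = Polynomial.C (cc ^ 3) * Polynomial.X ^ 5 := by rw [x15, cc, div_pow]
lemma y_eq : y15 = Polynomial.C (cc ^ 4) * Polynomial.X ^ 7 := by rw [y15, cc, div_pow]
lemma z_eq : z15 = Polynomial.C (cc ^ 5) * Polynomial.X ^ 7 := by rw [z15, cc, div_pow]

lemma w_mon : w15 = Polynomial.monomial 3 (cc ^ 2) := by
  rw [w_eq, Polynomial.C_mul_X_pow_eq_monomial]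
lemma x_mon : x15 = Polynomial.monomial 5 (cc ^ 3) := by
  rw [x_eq, Polynomial.C_mul_X_pow_eq_monomial]
lemma y_mon : y15 = Polynomial.monomial 7 (cc ^ 4) := by
  rw [y_eq, Polynomial.C_mul_X_pow_eq_monomial]
lemma z_mon : z15 = Polynomial.monomial 7 (cc ^ 5) := by
  rw [z_eq, Polynomial.C_mul_X_pow_eq_monomial]

lemma φX0 : φ15 (X 0) = w15 := by rw [φ15, aeval_X]; rfl
lemma φX1 : φ15 (X 1) = x15 := by rw [φ15, aeval_X]; rfl
lemma φX2 : φ15 (X 2) = y15 := by rw [φ15, aeval_X]; rfl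
lemma φX3 : φ15 (X 3) = z15 := by rw [φ15, aeval_X]; rfl

lemma φ_g1 : φ15 (X 0 * X 2 - X 1 ^ 2) = 0 := by
  rw [map_sub, map_mul, map_pow, φX0, φX2, φX1, w_mon, y_mon, x_mon,
    Polynomial.monomial_mul_monomial, Polynomial.monomial_pow]
  norm_num [← pow_add, ← pow_mul]

lemma φ_g2 : φ15 (X 0 ^ 4 - X 1 * X 3) = 0 := by
  rw [map_sub, map_pow, map_mul, φX0, φX1, φX3, w_mon, x_mon, z_mon,
    Polynomial.monomial_mul_monomial, Polynomial.monomial_pow]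
  norm_num [← pow_add, ← pow_mul]

lemma φ_g3 : φ15 (X 1 * X 0 ^ 3 - X 2 * X 3) = 0 := by
  rw [map_sub, map_mul, map_mul, map_pow, φX1, φX0, φX2, φX3, x_mon, w_mon, y_mon, z_mon,
    Polynomial.monomial_pow, Polynomial.monomial_mul_monomial,
    Polynomial.monomial_mul_monomial]
  norm_num [← pow_add, ← pow_mul]

lemma φ_monomial (d : Fin 4 →₀ ℕ) :
    φ15 (monomial d 1) =
      gfam (2 * d 0 + 3 * d 1 + 4 * d 2 + 5 * d 3, 3 * d 0 + 5 * d 1 + 7 * d 2 + 7 * d 3) := by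
  rw [φ15, aeval_monomial, map_one, one_mul,
    Finsupp.prod_fintype _ _ (fun i => pow_zero _), Fin.prod_univ_four]
  simp only [Matrix.cons_val_zero, Matrix.cons_val_one, Matrix.head_cons,
    Matrix.cons_val_two, Matrix.tail_cons, Matrix.cons_val_three]
  rw [w_mon, x_mon, y_mon, z_mon, Polynomial.monomial_pow, Polynomial.monomial_pow,
    Polynomial.monomial_pow, Polynomial.monomial_pow, Polynomial.monomial_mul_monomial,
    Polynomial.monomial_mul_monomial, Polynomial.monomial_mul_monomial, gfam,
    Polynomial.C_mul_X_pow_eq_monomial]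
  rw [← pow_mul, ← pow_mul, ← pow_mul, ← pow_mul, ← pow_add, ← pow_add, ← pow_add]

/-- The ideal of the three minors. -/
def I15 : Ideal (MvPolynomial (Fin 4) ℂ) :=
  Ideal.span
    {X 0 * X 2 - X 1 ^ 2, X 0 ^ 4 - X 1 * X 3, X 1 * X 0 ^ 3 - X 2 * X 3}

lemma I15_le_ker : I15 ≤ RingHom.ker φ15 := by
  rw [I15, Ideal.span_le]
  rintro p (rfl | rfl | rfl)
  · exact φ_g1
  · exact φ_g2
  · exact φ_g3

/-- Normal-form exponents. -/
def Nrm (d : Fin 4 →₀ ℕ) : Prop := d 1 ≤ 1 ∧ (d 3 = 0 ∨ (d 1 = 0 ∧ d 2 = 0))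

/-- The measure used for the reduction. -/
def μ15 (d : Fin 4 →₀ ℕ) : ℕ := d 0 + 3 * d 1 + 4 * d 2 + 10 * d 3

/-- The span of normal monomials. -/
def S15 : Submodule ℂ (MvPolynomial (Fin 4) ℂ) :=
  Submodule.span ℂ ((fun d => monomial d (1 : ℂ)) '' {d | Nrm d})

/-- Combined submodule. -/
def T15 : Submodule ℂ (MvPolynomial (Fin 4) ℂ) :=
  I15.restrictScalars ℂ ⊔ S15

lemma X_mul_monomial (i : Fin 4) (d : Fin 4 →₀ ℕ) :
    (X i : MvPolynomial (Fin 4) ℂ) * monomial d 1 = monomial (d + Finsupp.single i 1) 1 := by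
  rw [X, monomial_mul, one_mul, add_comm]

lemma red15 : ∀ n : ℕ, ∀ d : Fin 4 →₀ ℕ, μ15 d ≤ n → (monomial d (1 : ℂ)) ∈ T15 := by
  intro n
  induction n with
  | zero =>
    intro d hd
    have hnrm : Nrm d := by
      rw [Nrm]; rw [μ15] at hd; omega
    exact le_sup_right (α := Submodule ℂ (MvPolynomial (Fin 4) ℂ)) (a := I15.restrictScalars ℂ)
      (Submodule.subset_span ⟨d, hnrm, rfl⟩)
  | succ n ih =>
    intro d hd
    by_cases h1 : 2 ≤ d 1
    · have hle : Finsupp.single (1 : Fin 4) 2 ≤ d := by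
        rw [Finsupp.single_le_iff]; exact h1
      set d' := d - Finsupp.single (1 : Fin 4) 2 with hd'
      set d₁ := d' + Finsupp.single (0 : Fin 4) 1 + Finsupp.single (2 : Fin 4) 1 with hd₁
      have e1 : (X 1 ^ 2 : MvPolynomial (Fin 4) ℂ) * monomial d' 1 = monomial d 1 := by
        rw [X_pow_eq_monomial, monomial_mul, one_mul, add_tsub_cancel_of_le hle]
      have e2 : (X 0 * X 2 : MvPolynomial (Fin 4) ℂ) * monomial d' 1 = monomial d₁ 1 := by
        rw [mul_assoc, X_mul_monomial, X_mul_monomial, hd₁]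
        congr 1
        abel
      have iden : monomial d (1 : ℂ) =
          -(X 0 * X 2 - X 1 ^ 2) * monomial d' 1 + monomial d₁ 1 := by
        rw [neg_sub, sub_mul, e1, e2]; ring
      rw [iden]
      refine Submodule.add_mem _ ?_ ?_
      · refine le_sup_left (α := Submodule ℂ (MvPolynomial (Fin 4) ℂ)) (b := S15) ?_
        exact Ideal.mul_mem_right _ _ (neg_mem (Ideal.subset_span (by simp [I15])))
      · refine ih d₁ ?_
        have hμ : μ15 d₁ + 1 = μ15 d := by
          rw [μ15, μ15, hd₁, hd']
          simp (config := { decide := true })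
            [Finsupp.add_apply, Finsupp.tsub_apply, Finsupp.single_apply]
          omega
        omega
    · by_cases h2 : 1 ≤ d 1 ∧ 1 ≤ d 3
      · have hle : Finsupp.single (1 : Fin 4) 1 + Finsupp.single (3 : Fin 4) 1 ≤ d := by
          intro i
          simp only [Finsupp.add_apply, Finsupp.single_apply]
          fin_cases i <;> simp <;> omega
        set d' := d - (Finsupp.single (1 : Fin 4) 1 + Finsupp.single (3 : Fin 4) 1) with hd'
        set d₁ := d' + Finsupp.single (0 : Fin 4) 4 with hd₁
        have e1 : (X 1 * X 3 : MvPolynomial (Fin 4) ℂ) * monomial d' 1 = monomial d 1 := by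
          rw [X, X, monomial_mul, monomial_mul, one_mul, one_mul,
            add_tsub_cancel_of_le hle]
        have e2 : (X 0 ^ 4 : MvPolynomial (Fin 4) ℂ) * monomial d' 1 = monomial d₁ 1 := by
          rw [X_pow_eq_monomial, monomial_mul, one_mul, hd₁]
          congr 1
          abel
        have iden : monomial d (1 : ℂ) =
            -(X 0 ^ 4 - X 1 * X 3) * monomial d' 1 + monomial d₁ 1 := by
          rw [neg_sub, sub_mul, e1, e2]; ring
        rw [iden]
        refine Submodule.add_mem _ ?_ ?_
        · refine le_sup_left (α := Submodule ℂ (MvPolynomial (Fin 4) ℂ)) (b := S15) ?_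
          exact Ideal.mul_mem_right _ _ (neg_mem (Ideal.subset_span (by simp [I15])))
        · refine ih d₁ ?_
          have hμ : μ15 d₁ + 9 = μ15 d := by
            rw [μ15, μ15, hd₁, hd']
            simp (config := { decide := true })
              [Finsupp.add_apply, Finsupp.tsub_apply, Finsupp.single_apply]
            omega
          omega
      · by_cases h3 : 1 ≤ d 2 ∧ 1 ≤ d 3
        · have hle : Finsupp.single (2 : Fin 4) 1 + Finsupp.single (3 : Fin 4) 1 ≤ d := by
            intro i
            simp only [Finsupp.add_apply, Finsupp.single_apply]
            fin_cases i <;> simp <;> omega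
          set d' := d - (Finsupp.single (2 : Fin 4) 1 + Finsupp.single (3 : Fin 4) 1) with hd'
          set d₁ := d' + Finsupp.single (1 : Fin 4) 1 + Finsupp.single (0 : Fin 4) 3 with hd₁
          have e1 : (X 2 * X 3 : MvPolynomial (Fin 4) ℂ) * monomial d' 1 = monomial d 1 := by
            rw [X, X, monomial_mul, monomial_mul, one_mul, one_mul,
              add_tsub_cancel_of_le hle]
          have e2 : (X 1 * X 0 ^ 3 : MvPolynomial (Fin 4) ℂ) * monomial d' 1
              = monomial d₁ 1 := by
            rw [mul_comm (X 1), mul_assoc, X_mul_monomial, X_pow_eq_monomial,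
              monomial_mul, one_mul, hd₁]
            congr 1
            abel
          have iden : monomial d (1 : ℂ) =
              -(X 1 * X 0 ^ 3 - X 2 * X 3) * monomial d' 1 + monomial d₁ 1 := by
            rw [neg_sub, sub_mul, e1, e2]; ring
          rw [iden]
          refine Submodule.add_mem _ ?_ ?_
          · refine le_sup_left (α := Submodule ℂ (MvPolynomial (Fin 4) ℂ)) (b := S15) ?_
            exact Ideal.mul_mem_right _ _ (neg_mem (Ideal.subset_span (by simp [I15])))
          · refine ih d₁ ?_
            have hμ : μ15 d₁ + 8 = μ15 d := by
              rw [μ15, μ15, hd₁, hd']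
              simp (config := { decide := true })
                [Finsupp.add_apply, Finsupp.tsub_apply, Finsupp.single_apply]
              omega
            omega
        · have hnrm : Nrm d := by rw [Nrm]; omega
          exact le_sup_right (α := Submodule ℂ (MvPolynomial (Fin 4) ℂ))
            (a := I15.restrictScalars ℂ) (Submodule.subset_span ⟨d, hnrm, rfl⟩)

lemma T15_top : T15 = ⊤ := by
  rw [eq_top_iff]
  intro p _
  rw [p.as_sum]
  refine Submodule.sum_mem _ fun d hd => ?_
  have : (monomial d (coeff d p) : MvPolynomial (Fin 4) ℂ)
      = coeff d p • monomial d 1 := by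
    rw [smul_monomial, smul_eq_mul, mul_one]
  rw [this]
  exact Submodule.smul_mem _ _ (red15 (μ15 d) d le_rfl)

/-- The index map on normal exponents. -/
def ind15 (d : {d : Fin 4 →₀ ℕ // Nrm d}) : ℕ × ℕ :=
  (2 * d.1 0 + 3 * d.1 1 + 4 * d.1 2 + 5 * d.1 3,
   3 * d.1 0 + 5 * d.1 1 + 7 * d.1 2 + 7 * d.1 3)

lemma ind15_arith (a b c f a' b' c' f' : ℕ) (hb : b ≤ 1) (hd : f = 0 ∨ (b = 0 ∧ c = 0))
    (hb' : b' ≤ 1) (hd' : f' = 0 ∨ (b' = 0 ∧ c' = 0))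
    (h1 : 2 * a + 3 * b + 4 * c + 5 * f = 2 * a' + 3 * b' + 4 * c' + 5 * f')
    (h2 : 3 * a + 5 * b + 7 * c + 7 * f = 3 * a' + 5 * b' + 7 * c' + 7 * f') :
    a = a' ∧ b = b' ∧ c = c' ∧ f = f' := by
  rcases hd with h | h <;> rcases hd' with h' | h' <;> omega

lemma ind15_inj : Function.Injective ind15 := by
  intro d e h
  have h1 := congrArg Prod.fst h
  have h2 := congrArg Prod.snd h
  simp only [ind15] at h1 h2
  have key := ind15_arith _ _ _ _ _ _ _ _ d.2.1 d.2.2 e.2.1 e.2.2 h1 h2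
  apply Subtype.ext
  ext i
  fin_cases i
  · exact key.1
  · exact key.2.1
  · exact key.2.2.1
  · exact key.2.2.2

lemma S15_ker (s : MvPolynomial (Fin 4) ℂ) (hs : s ∈ S15) (hφ : φ15 s = 0) : s = 0 := by
  have hrange : ((fun d => monomial d (1 : ℂ)) '' {d | Nrm d})
      = Set.range (fun d : {d : Fin 4 →₀ ℕ // Nrm d} => monomial d.1 (1 : ℂ)) := by
    ext q
    constructor
    · rintro ⟨d, hd, rfl⟩; exact ⟨⟨d, hd⟩, rfl⟩
    · rintro ⟨⟨d, hd⟩, rfl⟩; exact ⟨d, hd, rfl⟩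
  rw [S15, hrange, ← Finsupp.range_linearCombination] at hs
  obtain ⟨l, rfl⟩ := hs
  have hli : LinearIndependent ℂ (gfam ∘ ind15) := gfam_li.comp ind15 ind15_inj
  have hcomb : Finsupp.linearCombination ℂ (gfam ∘ ind15) l = 0 := by
    rw [← hφ, Finsupp.linearCombination_apply, Finsupp.linearCombination_apply,
      Finsupp.sum, Finsupp.sum, map_sum]
    refine Finset.sum_congr rfl fun d hd => ?_
    rw [map_smul, φ_monomial]
    rfl
  have : l = 0 := linearIndependent_iff.1 hli l hcomb
  rw [this, map_zero]

/-- Main kernel computation for `φ15`. -/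
lemma ker_φ15 : RingHom.ker φ15 = I15 := by
  refine le_antisymm ?_ I15_le_ker
  intro p hp
  have hmem : p ∈ T15 := by rw [T15_top]; trivial
  rw [T15, Submodule.mem_sup] at hmem
  obtain ⟨i, hi, s, hs, rfl⟩ := hmem
  rw [Submodule.restrictScalars_mem] at hi
  have hφi : φ15 i = 0 := I15_le_ker hi
  have hφs : φ15 s = 0 := by
    rw [RingHom.mem_ker] at hp
    rw [map_add, hφi, zero_add] at hp
    exact hp
  rw [S15_ker s hs hφs, add_zero]
  exact hi

lemma ker_eq_of (v : Fin 4 → A15)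
    (hv : ∀ i, (v i : Polynomial RatFuncField) = ![w15, x15, y15, z15] i) :
    RingHom.ker (aeval v : MvPolynomial (Fin 4) ℂ →ₐ[ℂ] A15) = I15 := by
  rw [← ker_φ15]
  ext p
  rw [RingHom.mem_ker, RingHom.mem_ker]
  have hcomp : (A15.val.comp (aeval v) : MvPolynomial (Fin 4) ℂ →ₐ[ℂ] Polynomial RatFuncField)
      = φ15 := by
    apply MvPolynomial.algHom_ext
    intro i
    rw [AlgHom.comp_apply, aeval_X, φ15, aeval_X]
    exact hv i
  have hval : (((aeval v) p : A15) : Polynomial RatFuncField) = φ15 p :=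
    DFunLike.congr_fun hcomp p
  rw [Subtype.ext_iff, ZeroMemClass.coe_zero, hval]

/-- The kernel of the ℂ-algebra homomorphism
`ℂ[W,X,Y,Z] → A ⊆ ℂ(u,v)[T]`, `W ↦ w`, `X ↦ x`, `Y ↦ y`, `Z ↦ z`, is generated by the
2×2 minors `WY − X²`, `W⁴ − XZ`, `XW³ − YZ` of `[[W, X, Z], [X, Y, W³]]`. -/
theorem stmt_15 :
    RingHom.ker (MvPolynomial.aeval
        (![⟨w15, Algebra.subset_adjoin (by simp [A15])⟩,
           ⟨x15, Algebra.subset_adjoin (by simp [A15])⟩,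
           ⟨y15, Algebra.subset_adjoin (by simp [A15])⟩,
           ⟨z15, Algebra.subset_adjoin (by simp [A15])⟩] : Fin 4 → A15) :
        MvPolynomial (Fin 4) ℂ →ₐ[ℂ] A15) =
      Ideal.span
        {MvPolynomial.X 0 * MvPolynomial.X 2 - MvPolynomial.X 1 ^ 2,
         MvPolynomial.X 0 ^ 4 - MvPolynomial.X 1 * MvPolynomial.X 3,
         MvPolynomial.X 1 * MvPolynomial.X 0 ^ 3 - MvPolynomial.X 2 * MvPolynomial.X 3} := by
  exact ker_eq_of _ (fun i => by fin_cases i <;> rfl)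

end
end

section
/- Let R := ℂ[w,x,y,z]/(wy − x², w⁴ − xz, xw³ − yz). Then the quotient R/(y − z)R is isomorphic as a ℂ-algebra to the numerical semigroup ring ℂ[t³, t⁵, t⁷], the subalgebra of ℂ[t] generated by t³, t⁵, and t⁷. -/
open MvPolynomial

noncomputable def fvec : Fin 4 → Polynomial ℂ :=
  ![Polynomial.X ^ 3, Polynomial.X ^ 5, Polynomial.X ^ 7, Polynomial.X ^ 7]

noncomputable def phi : MvPolynomial (Fin 4) ℂ →ₐ[ℂ] Polynomial ℂ := aeval fvec

noncomputable def Jid : Ideal (MvPolynomial (Fin 4) ℂ) :=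
  Ideal.span {X 0 * X 2 - X 1 ^ 2, X 0 ^ 4 - X 1 * X 3, X 1 * X 0 ^ 3 - X 2 * X 3, X 2 - X 3}

-- relations in the quotient
lemma rel1 : Ideal.Quotient.mk Jid (X 1) * Ideal.Quotient.mk Jid (X 1)
    = Ideal.Quotient.mk Jid (X 0) * Ideal.Quotient.mk Jid (X 2) := by
  rw [← map_mul, ← map_mul, Ideal.Quotient.eq]
  have h : (X 1 * X 1 - X 0 * X 2 : MvPolynomial (Fin 4) ℂ)
      = -(X 0 * X 2 - X 1 ^ 2) := by ring
  rw [h]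
  exact neg_mem (Ideal.subset_span (by simp [Set.mem_insert_iff]))

lemma rel2 : Ideal.Quotient.mk Jid (X 1) * Ideal.Quotient.mk Jid (X 2)
    = Ideal.Quotient.mk Jid (X 0) ^ 4 := by
  rw [← map_mul, ← map_pow, Ideal.Quotient.eq]
  have h : (X 1 * X 2 - X 0 ^ 4 : MvPolynomial (Fin 4) ℂ)
      = X 1 * (X 2 - X 3) - (X 0 ^ 4 - X 1 * X 3) := by ring
  rw [h]
  exact sub_mem (Ideal.mul_mem_left _ _ (Ideal.subset_span (by simp [Set.mem_insert_iff])))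
    (Ideal.subset_span (by simp [Set.mem_insert_iff]))

lemma rel3 : Ideal.Quotient.mk Jid (X 2) * Ideal.Quotient.mk Jid (X 2)
    = Ideal.Quotient.mk Jid (X 1) * Ideal.Quotient.mk Jid (X 0) ^ 3 := by
  rw [← map_mul, ← map_pow, ← map_mul, Ideal.Quotient.eq]
  have h : (X 2 * X 2 - X 1 * X 0 ^ 3 : MvPolynomial (Fin 4) ℂ)
      = X 2 * (X 2 - X 3) - (X 1 * X 0 ^ 3 - X 2 * X 3) := by ring
  rw [h]
  exact sub_mem (Ideal.mul_mem_left _ _ (Ideal.subset_span (by simp [Set.mem_insert_iff])))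
    (Ideal.subset_span (by simp [Set.mem_insert_iff]))

lemma rel4 : Ideal.Quotient.mk Jid (X 3) = Ideal.Quotient.mk Jid (X 2) := by
  rw [Ideal.Quotient.eq]
  have h : (X 3 - X 2 : MvPolynomial (Fin 4) ℂ) = -(X 2 - X 3) := by ring
  rw [h]
  exact neg_mem (Ideal.subset_span (by simp [Set.mem_insert_iff]))

lemma normal (p : MvPolynomial (Fin 4) ℂ) :
    ∃ a b c : Polynomial ℂ,
      Ideal.Quotient.mk Jid p =
        Ideal.Quotient.mk Jid (Polynomial.aeval (X 0) a + Polynomial.aeval (X 0) b * X 1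
          + Polynomial.aeval (X 0) c * X 2) := by
  induction p using MvPolynomial.induction_on with
  | C r => exact ⟨Polynomial.C r, 0, 0, by simp⟩
  | add p q hp hq =>
      obtain ⟨a, b, c, hp⟩ := hp
      obtain ⟨a', b', c', hq⟩ := hq
      refine ⟨a + a', b + b', c + c', ?_⟩
      simp only [map_add, map_mul, hp, hq]
      ring
  | mul_X p i hp =>
      obtain ⟨a, b, c, hp⟩ := hp
      fin_cases i
      · refine ⟨a * Polynomial.X, b * Polynomial.X, c * Polynomial.X, ?_⟩
        simp only [map_mul, map_add, hp, Polynomial.aeval_X,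
          show (⟨0, by norm_num⟩ : Fin 4) = 0 from rfl]
        ring
      · refine ⟨c * Polynomial.X ^ 4, a, b * Polynomial.X, ?_⟩
        simp only [map_mul, map_add, map_pow, hp, Polynomial.aeval_X,
          show (⟨1, by norm_num⟩ : Fin 4) = 1 from rfl]
        linear_combination (Ideal.Quotient.mk Jid (Polynomial.aeval (X 0) b)) * rel1
          + (Ideal.Quotient.mk Jid (Polynomial.aeval (X 0) c)) * rel2
      · refine ⟨b * Polynomial.X ^ 4, c * Polynomial.X ^ 3, a, ?_⟩
        simp only [map_mul, map_add, map_pow, hp, Polynomial.aeval_X,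
          show (⟨2, by norm_num⟩ : Fin 4) = 2 from rfl]
        linear_combination (Ideal.Quotient.mk Jid (Polynomial.aeval (X 0) b)) * rel2
          + (Ideal.Quotient.mk Jid (Polynomial.aeval (X 0) c)) * rel3
      · refine ⟨b * Polynomial.X ^ 4, c * Polynomial.X ^ 3, a, ?_⟩
        simp only [map_mul, map_add, map_pow, hp, Polynomial.aeval_X,
          show (⟨3, by norm_num⟩ : Fin 4) = 3 from rfl, rel4]
        linear_combination (Ideal.Quotient.mk Jid (Polynomial.aeval (X 0) b)) * rel2
          + (Ideal.Quotient.mk Jid (Polynomial.aeval (X 0) c)) * rel3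

lemma aux_zero (a b c : Polynomial ℂ)
    (h : Polynomial.expand ℂ 3 a + Polynomial.expand ℂ 3 b * Polynomial.X ^ 5
        + Polynomial.expand ℂ 3 c * Polynomial.X ^ 7 = 0) :
    a = 0 ∧ b = 0 ∧ c = 0 := by
  have key : ∀ n : ℕ, (Polynomial.expand ℂ 3 a).coeff n
      + (Polynomial.expand ℂ 3 b * Polynomial.X ^ 5).coeff n
      + (Polynomial.expand ℂ 3 c * Polynomial.X ^ 7).coeff n = 0 := by
    intro n
    rw [← Polynomial.coeff_add, ← Polynomial.coeff_add, h, Polynomial.coeff_zero]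
  have hz : ∀ (q : Polynomial ℂ) (m : ℕ), ¬ (3 ∣ m) →
      (Polynomial.expand ℂ 3 q).coeff m = 0 := by
    intro q m hm
    rw [Polynomial.coeff_expand (by norm_num), if_neg hm]
  refine ⟨?_, ?_, ?_⟩
  · ext n
    have hk := key (3 * n)
    rw [Polynomial.coeff_mul_X_pow', Polynomial.coeff_mul_X_pow',
      Polynomial.coeff_expand (by norm_num), if_pos (dvd_mul_right 3 n),
      Nat.mul_div_cancel_left n (by norm_num : (0:ℕ) < 3)] at hk
    have e1 : (if 5 ≤ 3 * n then (Polynomial.expand ℂ 3 b).coeff (3 * n - 5) else 0) = 0 := by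
      split_ifs with h5
      · exact hz b _ (by omega)
      · rfl
    have e2 : (if 7 ≤ 3 * n then (Polynomial.expand ℂ 3 c).coeff (3 * n - 7) else 0) = 0 := by
      split_ifs with h7
      · exact hz c _ (by omega)
      · rfl
    rw [e1, e2] at hk
    simpa using hk
  · ext n
    have hk := key (3 * n + 5)
    rw [Polynomial.coeff_mul_X_pow', Polynomial.coeff_mul_X_pow',
      hz a _ (by omega), if_pos (by omega : 5 ≤ 3 * n + 5),
      show 3 * n + 5 - 5 = 3 * n from by omega,
      Polynomial.coeff_expand (by norm_num), if_pos (dvd_mul_right 3 n),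
      Nat.mul_div_cancel_left n (by norm_num : (0:ℕ) < 3)] at hk
    have e2 : (if 7 ≤ 3 * n + 5 then
        (Polynomial.expand ℂ 3 c).coeff (3 * n + 5 - 7) else 0) = 0 := by
      split_ifs with h7
      · exact hz c _ (by omega)
      · rfl
    rw [e2] at hk
    simpa using hk
  · ext n
    have hk := key (3 * n + 7)
    rw [Polynomial.coeff_mul_X_pow', Polynomial.coeff_mul_X_pow',
      hz a _ (by omega), if_pos (by omega : 5 ≤ 3 * n + 7),
      show 3 * n + 7 - 5 = 3 * n + 2 from by omega, hz b _ (by omega),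
      if_pos (by omega : 7 ≤ 3 * n + 7),
      show 3 * n + 7 - 7 = 3 * n from by omega,
      Polynomial.coeff_expand (by norm_num), if_pos (dvd_mul_right 3 n),
      Nat.mul_div_cancel_left n (by norm_num : (0:ℕ) < 3)] at hk
    simpa using hk

lemma J_le_ker : Jid ≤ RingHom.ker phi := by
  rw [Jid, Ideal.span_le]
  intro g hg
  simp only [Set.mem_insert_iff, Set.mem_singleton_iff] at hg
  rcases hg with rfl | rfl | rfl | rfl <;>
    · simp only [SetLike.mem_coe, RingHom.mem_ker, phi, map_sub, map_mul, map_pow, aeval_X, fvec,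
        Matrix.cons_val_zero, Matrix.cons_val_one, Matrix.head_cons, Matrix.cons_val_two,
        Matrix.tail_cons, Matrix.cons_val_three]
      ring

lemma phi_aeval (q : Polynomial ℂ) :
    phi (Polynomial.aeval (X 0) q) = Polynomial.expand ℂ 3 q := by
  rw [← Polynomial.aeval_algHom_apply phi (X 0 : MvPolynomial (Fin 4) ℂ) q,
    show phi (X 0) = Polynomial.X ^ 3 from by
      simp [phi, fvec],
    ← Polynomial.expand_aeval 3 q Polynomial.X, Polynomial.aeval_X_left_apply]

lemma ker_phi : RingHom.ker phi = Jid := by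
  refine le_antisymm ?_ J_le_ker
  intro p hp
  obtain ⟨a, b, c, hn⟩ := normal p
  set N : MvPolynomial (Fin 4) ℂ := Polynomial.aeval (X 0) a + Polynomial.aeval (X 0) b * X 1
      + Polynomial.aeval (X 0) c * X 2 with hN
  have hmem : p - N ∈ Jid := Ideal.Quotient.eq.mp hn
  have hpN : phi (p - N) = 0 := J_le_ker hmem
  have hphiN : phi N = 0 := by
    have : phi N = phi p - phi (p - N) := by rw [map_sub]; ring
    rw [this, hpN, RingHom.mem_ker.mp hp, sub_zero]
  have hx1 : phi (X 1) = Polynomial.X ^ 5 := by simp [phi, fvec]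
  have hx2 : phi (X 2) = Polynomial.X ^ 7 := by simp [phi, fvec]
  rw [hN, map_add, map_add, map_mul, map_mul, phi_aeval, phi_aeval, phi_aeval,
    hx1, hx2] at hphiN
  obtain ⟨ha, hb, hc⟩ := aux_zero a b c hphiN
  have hN0 : N = 0 := by rw [hN, ha, hb, hc]; simp
  rw [hN0, sub_zero] at hmem
  exact hmem

lemma range_phi : phi.range =
    Algebra.adjoin ℂ ({Polynomial.X ^ 3, Polynomial.X ^ 5, Polynomial.X ^ 7} :
      Set (Polynomial ℂ)) := by
  rw [phi, ← Algebra.adjoin_range_eq_range_aeval]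
  congr 1
  ext q
  constructor
  · rintro ⟨i, rfl⟩
    fin_cases i <;> simp [fvec]
  · rintro (rfl | rfl | rfl)
    · exact ⟨0, by simp [fvec]⟩
    · exact ⟨1, by simp [fvec]⟩
    · exact ⟨2, by simp [fvec]⟩

/-- For `R = ℂ[w,x,y,z]/(wy − x², w⁴ − xz, xw³ − yz)` (with
`w, x, y, z` the variables `X 0, X 1, X 2, X 3`), the quotient `R/(y − z)R` is
isomorphic as a ℂ-algebra to the numerical semigroup ring `ℂ[t³, t⁵, t⁷] ⊆ ℂ[t]`. -/
theorem stmt_17 (I : Ideal (MvPolynomial (Fin 4) ℂ))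
    (hI : I = Ideal.span
      {(X 0 * X 2 - X 1 ^ 2 : MvPolynomial (Fin 4) ℂ),
       (X 0 ^ 4 - X 1 * X 3 : MvPolynomial (Fin 4) ℂ),
       (X 1 * X 0 ^ 3 - X 2 * X 3 : MvPolynomial (Fin 4) ℂ)}) :
    Nonempty
      (((MvPolynomial (Fin 4) ℂ ⧸ I) ⧸
          Ideal.span {Ideal.Quotient.mk I (X 2 - X 3)}) ≃ₐ[ℂ]
        Algebra.adjoin ℂ ({Polynomial.X ^ 3, Polynomial.X ^ 5, Polynomial.X ^ 7} :
          Set (Polynomial ℂ))) := by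
  have hmap : Ideal.span {Ideal.Quotient.mk I (X 2 - X 3)}
      = Ideal.map (Ideal.Quotient.mkₐ ℂ I) (Ideal.span {(X 2 - X 3 : MvPolynomial (Fin 4) ℂ)}) := by
    rw [Ideal.map_span, Set.image_singleton, Ideal.Quotient.mkₐ_eq_mk]
  have hsup : I ⊔ Ideal.span {(X 2 - X 3 : MvPolynomial (Fin 4) ℂ)} = Jid := by
    rw [hI, Jid, ← Ideal.span_union]
    congr 1
    ext g
    simp only [Set.mem_union, Set.mem_insert_iff, Set.mem_singleton_iff]
    tauto
  refine ⟨?_⟩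
  exact (Ideal.quotientEquivAlgOfEq ℂ hmap).trans <|
    (DoubleQuot.quotQuotEquivQuotSupₐ ℂ I (Ideal.span {(X 2 - X 3 : MvPolynomial (Fin 4) ℂ)})).trans <|
    (Ideal.quotientEquivAlgOfEq ℂ (hsup.trans ker_phi.symm)).trans <|
    (Ideal.quotientKerEquivRange (R := ℂ) phi).trans <|
    Subalgebra.equivOfEq _ _ range_phi
end

section
/- Let R be a normal ℕ-graded domain of Krull dimension 2 with irredundant grading, finitely generated as an algebra over its degree-0 component R_0, where R_0 is an algebraically closed field k. Suppose x ∈ R_d is a prime element for some d > 0, and set s := gcd{n ∈ ℕ : (R/xR)_n ≠ 0}. Then lim_{t→1⁻} (1−t)² · Σ_{n≥0} (dim_k R_n) tⁿ = 1/(sd), where the sum is the Hilbert series of R, convergent for 0 ≤ t < 1. -/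
/-!
Multiplication by `x` identifies `R_{n-d}` with `R_n ∩ xR`, so
`dim R_n = dim (R/xR)_n + dim R_{n-d}`. Each `(R/xR)_n` has dimension at most one: given
homogeneous `u, v` of degree `n > 0` with `v ∉ xR`, choose a maximal ideal `M ⊇ xR` avoiding `v`
(`R` is a Jacobson ring) and `c ∈ k` with `u ≡ c v (mod M)` (`R/M = k` by the Nullstellensatz).
If `w = u - c v` were not in `xR`, the homogeneous core of `M` would be a homogeneous prime strictly
above `xR`; as `dim R = 2` it is maximal, hence the irrelevant ideal, which contains `v`.
Since `x` is prime, the degrees `n` with `(R/xR)_n ≠ 0` form a submonoid of `ℕ` of gcd `s`; it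
contains all large multiples of `s`, and `s > 0` because `R ≠ k[x]`. Hence
`∑ dim (R/xR)_n tⁿ = 1/(1 - tˢ) - p(t)` with `p` a polynomial, the Hilbert series is this divided
by `1 - tᵈ`, and `(1 - t)²` times it tends to `1/(sd)`.
-/

open Filter Set Topology Finset Module

namespace Submodule

variable {K M : Type*} [DivisionRing K] [AddCommGroup M] [Module K M]

theorem finrank_map_mkQ_add_finrank_inf (V W : Submodule K M) [FiniteDimensional K V] :
    finrank K (V.map W.mkQ) + finrank K (V ⊓ W : Submodule K M) = finrank K V := by
  have h := (W.mkQ.domRestrict V).finrank_range_add_finrank_ker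
  rwa [LinearMap.range_domRestrict, LinearMap.ker_domRestrict, W.ker_mkQ,
    ← finrank_map_subtype_eq, map_comap_subtype] at h

theorem map_mkQ_eq_span_singleton {V W : Submodule K M} {v : M} (hv : v ∈ V)
    (h : ∀ u ∈ V, ∃ c : K, u - c • v ∈ W) : V.map W.mkQ = span K {W.mkQ v} := by
  refine le_antisymm (map_le_iff_le_comap.mpr fun u hu => ?_)
    (span_le.mpr (singleton_subset_iff.mpr (mem_map_of_mem hv)))
  obtain ⟨c, hc⟩ := h u hu
  rw [mem_comap, mem_span_singleton]
  exact ⟨c, by rw [← map_smul]; exact (LinearMap.sub_mem_ker_iff.mp (by rwa [ker_mkQ])).symm⟩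

end Submodule

section Graded

variable {k R : Type*} [Field k] [CommRing R] [Algebra k R] {𝒜 : ℕ → Submodule k R}

theorem exists_algebraMap_eq_of_mem_zero (h0 : 𝒜 0 = Submodule.span k {1}) {r : R}
    (hr : r ∈ 𝒜 0) : ∃ c : k, algebraMap k R c = r := by
  rw [h0, Submodule.mem_span_singleton] at hr
  obtain ⟨c, rfl⟩ := hr
  exact ⟨c, Algebra.algebraMap_eq_smul_one c⟩

variable [GradedAlgebra 𝒜]

theorem Ideal.IsHomogeneous.le_irrelevant (h0 : 𝒜 0 = Submodule.span k {1}) {q : Ideal R}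
    (hq : q.IsHomogeneous 𝒜) (hq_top : q ≠ ⊤) : q ≤ (HomogeneousIdeal.irrelevant 𝒜).toIdeal := by
  intro r hr
  rw [HomogeneousIdeal.mem_iff, HomogeneousIdeal.mem_irrelevant_iff, GradedRing.proj_apply]
  obtain ⟨c, hc⟩ := exists_algebraMap_eq_of_mem_zero h0 (DirectSum.decompose 𝒜 r 0).2
  rcases eq_or_ne c 0 with rfl | hc0
  · rw [← hc, map_zero]
  · exact absurd (q.eq_top_of_isUnit_mem (hc ▸ hq 0 hr) ((Ne.isUnit hc0).map _)) hq_top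

theorem inf_span_singleton_eq {d : ℕ} {x : R} (hxd : x ∈ 𝒜 d) (n : ℕ) :
    𝒜 n ⊓ (Ideal.span {x}).restrictScalars k =
      if d ≤ n then (𝒜 (n - d)).map (LinearMap.mulLeft k x) else ⊥ := by
  classical
  ext r
  simp only [Submodule.mem_inf, Submodule.restrictScalars_mem, Ideal.mem_span_singleton']
  constructor
  · rintro ⟨hr, c, rfl⟩
    have hdec := DirectSum.coe_decompose_mul_of_right_mem 𝒜 n (a := c) hxd
    rw [DirectSum.decompose_of_mem_same 𝒜 hr] at hdec
    split_ifs at hdec ⊢ with hdn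
    · exact ⟨_, (DirectSum.decompose 𝒜 c (n - d)).2, by rw [hdec, LinearMap.mulLeft_apply, mul_comm]⟩
    · exact hdec
  · split_ifs with hdn
    · rintro ⟨y, hy, rfl⟩
      refine ⟨?_, y, mul_comm y x⟩
      simpa [Nat.add_sub_cancel' hdn] using SetLike.mul_mem_graded hxd hy
    · rintro rfl
      exact ⟨zero_mem _, 0, zero_mul x⟩

variable (𝒜) in
def nonvanishingDegrees (P : Ideal R) [hP : P.IsPrime] : AddSubmonoid ℕ where
  carrier := {n | ∃ r ∈ 𝒜 n, r ∉ P}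
  zero_mem' := ⟨1, SetLike.one_mem_graded 𝒜, hP.one_notMem⟩
  add_mem' := fun ⟨r, hr, hrP⟩ ⟨r', hr', hr'P⟩ =>
    ⟨r * r', SetLike.mul_mem_graded hr hr', hP.mul_notMem hrP hr'P⟩

end Graded

theorem Ideal.isMaximal_of_bot_lt_of_lt {R : Type*} [CommRing R] [IsDomain R]
    (hdim : ringKrullDim R ≤ 2) {p q : Ideal R} [p.IsPrime] [q.IsPrime] (hp : ⊥ < p)
    (hpq : p < q) : q.IsMaximal := by
  by_contra hq
  obtain ⟨M, hM, hqM⟩ := q.exists_le_maximal IsPrime.ne_top'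
  have hqM' : q < M := lt_of_le_of_ne hqM (by rintro rfl; exact hq hM)
  have h₁ := Ideal.height_add_one_le_of_lt_of_isPrime hp
  have h₂ := Ideal.height_add_one_le_of_lt_of_isPrime hpq
  have h₃ := Ideal.height_add_one_le_of_lt_of_isPrime hqM'
  have hM_le : (M.height : WithBot ℕ∞) ≤ 2 := M.height_le_ringKrullDim_of_isPrime.trans hdim
  rw [Ideal.height_bot, zero_add] at h₁
  have : (3 : ℕ∞) ≤ M.height :=
    le_trans (by norm_num) ((add_le_add ((add_le_add h₁ le_rfl).trans h₂) le_rfl).trans h₃)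
  have := (WithBot.coe_le_coe.mpr this).trans hM_le
  norm_num at this

theorem exists_sub_algebraMap_mem_of_isMaximal {k R : Type*} [Field k] [IsAlgClosed k]
    [CommRing R] [Algebra k R] [Algebra.FiniteType k R] (M : Ideal R) [M.IsMaximal] (u : R) :
    ∃ c : k, u - algebraMap k R c ∈ M := by
  let := Ideal.Quotient.field M
  have : Module.Finite k (R ⧸ M) := finite_of_finite_type_of_isJacobsonRing k (R ⧸ M)
  obtain ⟨c, hc⟩ :=
    (IsAlgClosed.algebraMap_bijective_of_isIntegral (k := k) (K := R ⧸ M)).2 (Ideal.Quotient.mk M u)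
  exact ⟨c, Ideal.Quotient.eq.mp (by rw [← hc]; rfl)⟩

theorem ringKrullDim_le_one_of_adjoin_singleton_eq_top {k R : Type*} [Field k] [CommRing R]
    [Algebra k R] {x : R} (h : Algebra.adjoin k {x} = ⊤) : ringKrullDim R ≤ 1 := by
  have hsurj : Function.Surjective (Polynomial.aeval (R := k) x) := by
    rw [← AlgHom.range_eq_top, ← Algebra.adjoin_singleton_eq_range_aeval, h]
  exact (ringKrullDim_le_of_surjective _ hsurj).trans (Ring.krullDimLE_iff.mp inferInstance)

section HilbertFunction

variable {k R : Type*} [Field k] [CommRing R] [Algebra k R]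
  {𝒜 : ℕ → Submodule k R} [GradedAlgebra 𝒜]

theorem Ideal.IsHomogeneous.exists_sub_smul_mem [IsAlgClosed k] [Algebra.FiniteType k R]
    {P : Ideal R} [P.IsPrime] (hP : P.IsHomogeneous 𝒜) (h0 : 𝒜 0 = Submodule.span k {1})
    (hmax : ∀ q : Ideal R, q.IsPrime → q.IsHomogeneous 𝒜 → P < q → q.IsMaximal)
    {n : ℕ} {u v : R} (hu : u ∈ 𝒜 n) (hv : v ∈ 𝒜 n) (hvP : v ∉ P) :
    ∃ c : k, u - c • v ∈ P := by
  rcases n.eq_zero_or_pos with rfl | hn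
  · obtain ⟨a, rfl⟩ := exists_algebraMap_eq_of_mem_zero h0 hu
    obtain ⟨b, rfl⟩ := exists_algebraMap_eq_of_mem_zero h0 hv
    have hb : b ≠ 0 := by rintro rfl; exact hvP (by simp)
    refine ⟨a / b, ?_⟩
    rw [Algebra.smul_def, ← map_mul, div_mul_cancel₀ a hb, sub_self]
    exact P.zero_mem
  have := isJacobsonRing_of_finiteType (A := k) (B := R)
  obtain ⟨M, ⟨hPM, hM⟩, hvM⟩ :=
    Ideal.eq_jacobson_iff_notMem.mp (IsJacobsonRing.out' P ‹P.IsPrime›.isRadical) v hvP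
  obtain ⟨a, ha⟩ := exists_sub_algebraMap_mem_of_isMaximal (k := k) M u
  obtain ⟨b, hb⟩ := exists_sub_algebraMap_mem_of_isMaximal (k := k) M v
  have hb0 : b ≠ 0 := by rintro rfl; exact hvM (by simpa using hb)
  have hwM : u - (a / b) • v ∈ M := by
    have : u - (a / b) • v =
        (u - algebraMap k R a) - (a / b) • (v - algebraMap k R b) := by
      rw [smul_sub, Algebra.smul_def (a / b) (algebraMap k R b), ← map_mul,
        div_mul_cancel₀ a hb0]
      ring
    rw [this]
    exact M.sub_mem ha (M.smul_of_tower_mem _ hb)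
  refine ⟨a / b, by_contra fun hwP => hvM ?_⟩
  set q := (M.homogeneousCore 𝒜).toIdeal
  have hwq : u - (a / b) • v ∈ q :=
    Ideal.mem_homogeneousCore_of_homogeneous_of_mem
      ⟨n, Submodule.sub_mem _ hu (Submodule.smul_mem _ _ hv)⟩ hwM
  have hPq : P < q := lt_of_le_of_ne
    (hP.toIdeal_homogeneousCore_eq_self ▸ Ideal.homogeneousCore_mono 𝒜 hPM)
    (by rintro h; exact hwP (h ▸ hwq))
  have hq := hmax q hM.isPrime.homogeneousCore (M.homogeneousCore 𝒜).isHomogeneous hPq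
  have : Nontrivial R := nontrivial_of_ne v 0 (by rintro rfl; exact hvP P.zero_mem)
  have hq_irr : q = (HomogeneousIdeal.irrelevant 𝒜).toIdeal :=
    hq.eq_of_le (by rw [HomogeneousIdeal.toIdeal_irrelevant]; exact RingHom.ker_ne_top _)
      ((M.homogeneousCore 𝒜).isHomogeneous.le_irrelevant h0 hq.ne_top)
  have hvq : v ∈ q := by rw [hq_irr]; exact HomogeneousIdeal.mem_irrelevant_of_mem 𝒜 hn hv
  exact Ideal.toIdeal_homogeneousCore_le 𝒜 M hvq

variable (P : Ideal R) [P.IsPrime] {n : ℕ}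

theorem map_mkQ_eq_bot_of_notMem (h : n ∉ nonvanishingDegrees 𝒜 P) :
    (𝒜 n).map (P.restrictScalars k).mkQ = ⊥ :=
  LinearMap.le_ker_iff_map.mp fun r hr => by
    rw [Submodule.ker_mkQ]; exact by_contra fun hrP => h ⟨r, hr, hrP⟩

theorem finrank_map_mkQ_eq_indicator
    (hprop : ∀ u ∈ 𝒜 n, ∀ v ∈ 𝒜 n, v ∉ P → ∃ c : k, u - c • v ∈ P) :
    finrank k ((𝒜 n).map (P.restrictScalars k).mkQ) =
      (nonvanishingDegrees 𝒜 P : Set ℕ).indicator 1 n := by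
  by_cases h : n ∈ nonvanishingDegrees 𝒜 P
  · have ⟨v, hv, hvP⟩ := h
    rw [Set.indicator_of_mem h, Submodule.map_mkQ_eq_span_singleton hv
      (fun u hu => hprop u hu v hv hvP), finrank_span_singleton]
    · rfl
    · rwa [Submodule.mkQ_apply, ne_eq, Submodule.Quotient.mk_eq_zero]
  · rw [Set.indicator_of_notMem h, map_mkQ_eq_bot_of_notMem P h, finrank_bot]

theorem finiteDimensional_map_mkQ
    (hprop : ∀ u ∈ 𝒜 n, ∀ v ∈ 𝒜 n, v ∉ P → ∃ c : k, u - c • v ∈ P) :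
    FiniteDimensional k ((𝒜 n).map (P.restrictScalars k).mkQ) := by
  by_cases h : n ∈ nonvanishingDegrees 𝒜 P
  · obtain ⟨v, hv, hvP⟩ := h
    rw [Submodule.map_mkQ_eq_span_singleton hv (fun u hu => hprop u hu v hv hvP)]
    infer_instance
  · rw [map_mkQ_eq_bot_of_notMem P h]
    infer_instance

theorem finrank_eq_indicator_add_finrank_inf [FiniteDimensional k (𝒜 n)]
    (hprop : ∀ u ∈ 𝒜 n, ∀ v ∈ 𝒜 n, v ∉ P → ∃ c : k, u - c • v ∈ P) :
    finrank k (𝒜 n) = (nonvanishingDegrees 𝒜 P : Set ℕ).indicator 1 n +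
      finrank k (𝒜 n ⊓ P.restrictScalars k : Submodule k R) := by
  rw [← Submodule.finrank_map_mkQ_add_finrank_inf, finrank_map_mkQ_eq_indicator P hprop]

section PrincipalPrime

variable {d : ℕ} {x : R}

theorem finrank_inf_span_singleton (hxd : x ∈ 𝒜 d) (hx : IsLeftRegular x) (n : ℕ) :
    finrank k (𝒜 n ⊓ (Ideal.span {x}).restrictScalars k : Submodule k R) =
      if d ≤ n then finrank k (𝒜 (n - d)) else 0 := by
  rw [inf_span_singleton_eq hxd]
  by_cases hdn : d ≤ n
  · rw [if_pos hdn, if_pos hdn]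
    exact (LinearEquiv.finrank_eq (Submodule.equivMapOfInjective _ (fun _ _ h => hx h) _)).symm
  · rw [if_neg hdn, if_neg hdn, finrank_bot]

theorem finiteDimensional_of_span_singleton [(Ideal.span {x}).IsPrime] (hd : 0 < d)
    (hxd : x ∈ 𝒜 d) (hprop : ∀ n, ∀ u ∈ 𝒜 n, ∀ v ∈ 𝒜 n, v ∉ Ideal.span {x} →
      ∃ c : k, u - c • v ∈ Ideal.span {x}) (n : ℕ) :
    FiniteDimensional k (𝒜 n) := by
  induction n using Nat.strong_induction_on with
  | _ n ih =>
  have := finiteDimensional_map_mkQ (Ideal.span {x}) (hprop n)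
  rw [← Submodule.fg_iff_finiteDimensional]
  refine Submodule.fg_of_fg_map_of_fg_inf_ker _ (Submodule.fg_iff_finiteDimensional _ |>.mpr this) ?_
  rw [Submodule.ker_mkQ, inf_span_singleton_eq hxd]
  split_ifs with hdn
  · exact ((Submodule.fg_iff_finiteDimensional _).mpr (ih (n - d) (by omega))).map _
  · exact Submodule.fg_bot

theorem adjoin_singleton_eq_top (h0 : 𝒜 0 = Submodule.span k {1}) (hd : 0 < d) (hxd : x ∈ 𝒜 d)
    (h : ∀ n, 0 < n → 𝒜 n ≤ (Ideal.span {x}).restrictScalars k) :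
    Algebra.adjoin k {x} = ⊤ := by
  suffices hle : ∀ n, 𝒜 n ≤ Subalgebra.toSubmodule (Algebra.adjoin k {x}) by
    rw [eq_top_iff]
    intro r _
    have hr : r ∈ ⨆ n, 𝒜 n := by
      rw [(DirectSum.Decomposition.isInternal 𝒜).submodule_iSup_eq_top]; trivial
    exact iSup_le hle hr
  intro n
  induction n using Nat.strong_induction_on with
  | _ n ih =>
  rcases n.eq_zero_or_pos with rfl | hn
  · rw [h0, Submodule.span_le, Set.singleton_subset_iff]
    exact Subalgebra.one_mem _
  · intro r hr
    have hr' : r ∈ 𝒜 n ⊓ (Ideal.span {x}).restrictScalars k := ⟨hr, h n hn hr⟩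
    rw [inf_span_singleton_eq hxd] at hr'
    split_ifs at hr' with hdn
    · obtain ⟨y, hy, rfl⟩ := hr'
      exact Subalgebra.mul_mem _ (Algebra.self_mem_adjoin_singleton k x)
        (ih (n - d) (by omega) hy)
    · rw [(Submodule.mem_bot k).mp hr']
      exact Subalgebra.zero_mem _

theorem exists_pos_mem_nonvanishingDegrees [(Ideal.span {x}).IsPrime]
    (h0 : 𝒜 0 = Submodule.span k {1}) (hdim : 1 < ringKrullDim R) (hd : 0 < d)
    (hxd : x ∈ 𝒜 d) : ∃ n, 0 < n ∧ n ∈ nonvanishingDegrees 𝒜 (Ideal.span {x}) := by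
  by_contra! h
  refine hdim.not_ge (ringKrullDim_le_one_of_adjoin_singleton_eq_top
    (adjoin_singleton_eq_top h0 hd hxd fun n hn r hr => ?_))
  by_contra hrx
  exact h n hn ⟨r, hr, hrx⟩

end PrincipalPrime

end HilbertFunction

theorem tendsto_one_sub_div_one_sub_pow {m : ℕ} (hm : 0 < m) :
    Tendsto (fun t : ℝ => (1 - t) / (1 - t ^ m)) (𝓝[<] 1) (𝓝 (1 / m)) := by
  have hG : ContinuousAt (fun t : ℝ => (∑ i ∈ range m, t ^ i)⁻¹) 1 :=
    (continuous_finsetSum _ fun i _ => continuous_pow i).continuousAt.inv₀ (by simp; omega)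
  have hG₁ : (∑ i ∈ range m, (1 : ℝ) ^ i)⁻¹ = 1 / m := by simp
  refine ((hG₁ ▸ hG.tendsto).mono_left nhdsWithin_le_nhds).congr' ?_
  filter_upwards [self_mem_nhdsWithin] with t ht
  rw [← geom_sum_mul_neg, div_mul_cancel_right₀ (sub_ne_zero.mpr (ne_of_gt ht))]

theorem tsum_mul_pow_eq_of_eventually_eq_one {e : ℕ → ℝ} {N : ℕ} (he : ∀ j ≥ N, e j = 1)
    {u : ℝ} (hu₀ : 0 ≤ u) (hu₁ : u < 1) :
    ∑' j, e j * u ^ j = (1 - u)⁻¹ - ∑ j ∈ range N, (1 - e j) * u ^ j := by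
  have hfin : ∀ j ∉ range N, (1 - e j) * u ^ j = 0 := fun j hj => by
    rw [he j (by simpa using hj), sub_self, zero_mul]
  rw [← tsum_geometric_of_lt_one hu₀ hu₁, ← tsum_eq_sum (L := .unconditional ℕ) hfin,
    ← (summable_geometric_of_lt_one hu₀ hu₁).tsum_sub (summable_of_ne_finset_zero hfin)]
  congr 1 with j
  ring

theorem one_sub_pow_mul_tsum_eq_of_rec {a b : ℕ → ℝ} {d : ℕ} {t : ℝ}
    (hrec : ∀ n, a n = b n + if d ≤ n then a (n - d) else 0)
    (ha : Summable fun n => a n * t ^ n) (hb : Summable fun n => b n * t ^ n) :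
    (1 - t ^ d) * ∑' n, a n * t ^ n = ∑' n, b n * t ^ n := by
  have hshift : ∑' n, (if d ≤ n then a (n - d) else 0) * t ^ n = t ^ d * ∑' n, a n * t ^ n := by
    rw [← tsum_mul_left, ← (add_left_injective d).tsum_eq]
    · congr 1 with m
      rw [if_pos (Nat.le_add_left d m), Nat.add_sub_cancel, pow_add]
      ring
    · intro n hn
      have hdn : d ≤ n := by by_contra h; simp [h] at hn
      exact ⟨n - d, Nat.sub_add_cancel hdn⟩
  have hdiff : ∑' n, a n * t ^ n - ∑' n, b n * t ^ n =
      ∑' n, (if d ≤ n then a (n - d) else 0) * t ^ n := by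
    rw [← ha.tsum_sub hb]
    congr 1 with n
    rw [hrec n]
    ring
  linear_combination hshift + hdiff

theorem tendsto_one_sub_mul_tsum_indicator {S : Set ℕ} {s N : ℕ} (hs : 0 < s)
    (hS : ∀ n ∈ S, s ∣ n) (hN : ∀ j ≥ N, s * j ∈ S) :
    Tendsto (fun t : ℝ => (1 - t) * ∑' n, S.indicator 1 n * t ^ n) (𝓝[<] 1) (𝓝 (1 / s)) := by
  set e : ℕ → ℝ := fun j => S.indicator 1 (s * j)
  have he : ∀ j ≥ N, e j = 1 := fun j hj => Set.indicator_of_mem (hN j hj) 1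
  set F : ℝ → ℝ := fun t => ∑ j ∈ range N, (1 - e j) * (t ^ s) ^ j
  have hF : Continuous F := by fun_prop
  have hlim : Tendsto (fun t => (1 - t) / (1 - t ^ s) - (1 - t) * F t) (𝓝[<] 1)
      (𝓝 (1 / s - (1 - 1) * F 1)) :=
    (tendsto_one_sub_div_one_sub_pow hs).sub
      ((((continuous_const.sub continuous_id).mul hF).tendsto 1).mono_left nhdsWithin_le_nhds)
  rw [sub_self, zero_mul, sub_zero] at hlim
  refine hlim.congr' ?_
  filter_upwards [Ioo_mem_nhdsLT zero_lt_one] with t ⟨ht₀, ht₁⟩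
  have hreindex : ∑' n, S.indicator 1 n * t ^ n = ∑' j, e j * (t ^ s) ^ j := by
    rw [← (mul_right_injective₀ hs.ne').tsum_eq]
    · simp only [e, pow_mul]
    · intro n hn
      have hnS : n ∈ S := by by_contra h; simp [h] at hn
      obtain ⟨j, rfl⟩ := hS n hnS
      exact ⟨j, rfl⟩
  rw [hreindex, tsum_mul_pow_eq_of_eventually_eq_one he (by positivity)
    (pow_lt_one₀ ht₀.le ht₁ hs.ne'), mul_sub, div_eq_mul_inv]

theorem tendsto_one_sub_sq_mul_tsum {a : ℕ → ℕ} {S : Set ℕ} {d s N : ℕ} (hd : 0 < d)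
    (hs : 0 < s) (hrec : ∀ n, a n = S.indicator 1 n + if d ≤ n then a (n - d) else 0)
    (hS : ∀ n ∈ S, s ∣ n) (hN : ∀ j ≥ N, s * j ∈ S) :
    Tendsto (fun t : ℝ => (1 - t) ^ 2 * ∑' n, (a n : ℝ) * t ^ n) (𝓝[<] 1)
      (𝓝 (1 / ((s : ℝ) * (d : ℝ)))) := by
  have hle : ∀ n, a n ≤ n + 1 := by
    intro n
    induction n using Nat.strong_induction_on with
    | _ n ih =>
    have : S.indicator 1 n ≤ 1 := Set.indicator_le_self' (fun _ _ => zero_le_one) n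
    rw [hrec n]
    split_ifs with hdn
    · have := ih (n - d) (by omega); omega
    · omega
  have hrecℝ : ∀ n, (a n : ℝ) = S.indicator 1 n + if d ≤ n then (a (n - d) : ℝ) else 0 := by
    intro n
    rw [hrec n]
    by_cases h : n ∈ S <;> split_ifs <;> simp [h]
  have hlim := (tendsto_one_sub_div_one_sub_pow hd).mul (tendsto_one_sub_mul_tsum_indicator hs hS hN)
  rw [one_div_mul_one_div, mul_comm (d : ℝ)] at hlim
  refine hlim.congr' ?_
  filter_upwards [Ioo_mem_nhdsLT zero_lt_one] with t ⟨ht₀, ht₁⟩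
  have hgeom : Summable fun n : ℕ => t ^ n := summable_geometric_of_lt_one ht₀.le ht₁
  have hA : Summable fun n => (a n : ℝ) * t ^ n := by
    refine Summable.of_nonneg_of_le (fun n => by positivity) (fun n => ?_)
      (((hasSum_coe_mul_geometric_of_norm_lt_one (𝕜 := ℝ) (by
        rwa [Real.norm_of_nonneg ht₀.le])).summable.add hgeom))
    rw [← add_one_mul]
    exact mul_le_mul_of_nonneg_right (by exact_mod_cast hle n) (by positivity)
  have hB : Summable fun n => S.indicator (1 : ℕ → ℝ) n * t ^ n :=
    hgeom.of_nonneg_of_le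
      (fun n => mul_nonneg (Set.indicator_nonneg (fun _ _ => zero_le_one) n) (by positivity))
      (fun n => mul_le_of_le_one_left (by positivity)
        (Set.indicator_le_self' (fun _ _ => zero_le_one) n))
  have hd' : 1 - t ^ d ≠ 0 := (sub_pos.mpr (pow_lt_one₀ ht₀.le ht₁ hd.ne')).ne'
  rw [← one_sub_pow_mul_tsum_eq_of_rec hrecℝ hA hB]
  field_simp

theorem stmt_18_general {k R : Type*} [Field k] [IsAlgClosed k] [CommRing R] [IsDomain R]
    [Algebra k R]
    (𝒜 : ℕ → Submodule k R) [GradedAlgebra 𝒜]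
    (h0 : 𝒜 0 = Submodule.span k {1})
    (hft : Algebra.FiniteType k R)
    (hdim : ringKrullDim R = 2)
    (d : ℕ) (hd : 0 < d) (x : R) (hxd : x ∈ 𝒜 d) (hx : Prime x)
    (s : ℕ)
    (hs1 : ∀ n : ℕ, (∃ r ∈ 𝒜 n, r ∉ Ideal.span {x}) → s ∣ n)
    (hs2 : ∀ m : ℕ, (∀ n : ℕ, (∃ r ∈ 𝒜 n, r ∉ Ideal.span {x}) → m ∣ n) → m ∣ s) :
    Filter.Tendsto
      (fun t : ℝ => (1 - t) ^ 2 * ∑' n : ℕ, (Module.finrank k (𝒜 n) : ℝ) * t ^ n)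
      (nhdsWithin 1 (Set.Iio 1))
      (nhds (1 / ((s : ℝ) * (d : ℝ)))) := by
  have := hft
  have : (Ideal.span {x}).IsPrime := (Ideal.span_singleton_prime hx.ne_zero).mpr hx
  set S := nonvanishingDegrees 𝒜 (Ideal.span {x})
  have hprop : ∀ n, ∀ u ∈ 𝒜 n, ∀ v ∈ 𝒜 n, v ∉ Ideal.span {x} →
      ∃ c : k, u - c • v ∈ Ideal.span {x} := fun n u hu v hv hvx =>
    (Ideal.homogeneous_span 𝒜 {x} (by simpa using ⟨d, hxd⟩)).exists_sub_smul_mem h0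
      (fun q _ _ hxq => Ideal.isMaximal_of_bot_lt_of_lt hdim.le
        (bot_lt_iff_ne_bot.mpr (by simpa using hx.ne_zero)) hxq) hu hv hvx
  have hrec : ∀ n, finrank k (𝒜 n) =
      (S : Set ℕ).indicator 1 n + if d ≤ n then finrank k (𝒜 (n - d)) else 0 := fun n => by
    have := finiteDimensional_of_span_singleton hd hxd hprop n
    rw [finrank_eq_indicator_add_finrank_inf _ (hprop n), finrank_inf_span_singleton hxd
      (IsLeftCancelMulZero.mul_left_cancel_of_ne_zero hx.ne_zero)]
  have hs : s = Nat.setGcd S :=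
    Nat.dvd_antisymm (Nat.dvd_setGcd_iff.mpr hs1) (hs2 _ fun n hn => Nat.setGcd_dvd_of_mem hn)
  obtain ⟨n₀, hn₀, hn₀S⟩ := exists_pos_mem_nonvanishingDegrees h0 (by rw [hdim]; norm_num) hd hxd
  have hs_pos : 0 < s := Nat.pos_of_dvd_of_pos (hs1 n₀ hn₀S) hn₀
  obtain ⟨N, hN⟩ := Nat.exists_mem_closure_of_ge (S : Set ℕ)
  rw [AddSubmonoid.closure_eq, ← hs] at hN
  exact tendsto_one_sub_sq_mul_tsum hd hs_pos hrec hs1 fun j hj =>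
    hN (s * j) (hj.trans (Nat.le_mul_of_pos_left j hs_pos)) (dvd_mul_right s j)

/-- Let `R` be a normal ℕ-graded domain of Krull dimension 2 with
irredundant grading, finitely generated over `R₀ = k` an algebraically closed field.
If `x ∈ R_d` (`d > 0`) is a prime element and `s` is the gcd of the degrees in which
`R/xR` is nonzero, then `lim_{t→1⁻} (1−t)² · Σ_{n} dim_k(R_n) tⁿ = 1/(sd)`. -/
theorem stmt_18 {k R : Type*} [Field k] [IsAlgClosed k] [CommRing R] [IsDomain R]
    [IsIntegrallyClosed R] [Algebra k R]
    (𝒜 : ℕ → Submodule k R) [GradedAlgebra 𝒜]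
    (h0 : 𝒜 0 = Submodule.span k {1})
    (hft : Algebra.FiniteType k R)
    (hdim : ringKrullDim R = 2)
    (hirr : ∀ m : ℕ, (∀ n : ℕ, 𝒜 n ≠ ⊥ → m ∣ n) → m = 1)
    (d : ℕ) (hd : 0 < d) (x : R) (hxd : x ∈ 𝒜 d) (hx : Prime x)
    (s : ℕ)
    (hs1 : ∀ n : ℕ, (∃ r ∈ 𝒜 n, r ∉ Ideal.span {x}) → s ∣ n)
    (hs2 : ∀ m : ℕ, (∀ n : ℕ, (∃ r ∈ 𝒜 n, r ∉ Ideal.span {x}) → m ∣ n) → m ∣ s) :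
    Filter.Tendsto
      (fun t : ℝ => (1 - t) ^ 2 * ∑' n : ℕ, (Module.finrank k (𝒜 n) : ℝ) * t ^ n)
      (nhdsWithin 1 (Set.Iio 1))
      (nhds (1 / ((s : ℝ) * (d : ℝ)))) :=
  stmt_18_general 𝒜 h0 hft hdim d hd x hxd hx s hs1 hs2
end

section
/- Let R be an ℕ-graded domain of Krull dimension 2, finitely generated as an algebra over its degree-0 component R_0, where R_0 is an algebraically closed field k. Suppose x ∈ R_d is a prime element for some d > 0, and suppose the induced grading on R/xR is irredundant, i.e., gcd{n ∈ ℕ : (R/xR)_n ≠ 0} = 1. Then there exists N such that for all n ≥ N, dim_k R_{n+d} = 1 + dim_k R_n. -/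
/-!
The degrees `n` with `(R/xR)_n ≠ 0` form a submonoid of `ℕ` (as `xR` is prime) of gcd `1`,
so they contain every large `n`. In such a degree `m > 0` the piece `(R/xR)_m` is a line: if
`ū ≠ 0`, the Nullstellensatz gives a maximal ideal `M ⊇ xR` avoiding `u` with `R/M = k`, hence
`v - c u ∈ M` for some `c`. Were `v - c u ∉ xR`, the homogeneous core `M*` of `M` would sit
strictly between `xR` and the irrelevant ideal (it misses `u`), giving a chain
`0 < xR < M* < R₊` of primes, impossible in dimension `2`. Finally
`0 → R_n → R_{n+d} → (R/xR)_{n+d} → 0`, the first map being multiplication by `x`, is exact.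
-/

open DirectSum HomogeneousIdeal

theorem Nat.exists_forall_ge_mem_of_setGcd_eq_one (S : AddSubmonoid ℕ) (h : Nat.setGcd S = 1) :
    ∃ N, ∀ n ≥ N, n ∈ S := by
  obtain ⟨N, hN⟩ := Nat.exists_mem_closure_of_ge (S : Set ℕ)
  exact ⟨N, fun n hn => by simpa using hN n hn (h ▸ one_dvd n)⟩

theorem Order.three_le_krullDim_of_lt {α : Type*} [Preorder α] {a b c d : α}
    (hab : a < b) (hbc : b < c) (hcd : c < d) : 3 ≤ Order.krullDim α := by
  let s : LTSeries α := RelSeries.fromListIsChain [a, b, c, d] (by simp)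
    (by simp [List.isChain_cons_cons, hab, hbc, hcd])
  exact_mod_cast Order.LTSeries.length_le_krullDim s

theorem Ideal.Quotient.algebraMap_surjective_of_isMaximal {k A : Type*} [Field k]
    [IsAlgClosed k] [CommRing A] [Algebra k A] [Algebra.FiniteType k A]
    (M : Ideal A) [M.IsMaximal] :
    Function.Surjective (algebraMap k (A ⧸ M)) := by
  let := Ideal.Quotient.field M
  have : Algebra.FiniteType k (A ⧸ M) :=
    .of_surjective (Ideal.Quotient.mkₐ k M) (Ideal.Quotient.mkₐ_surjective k M)
  have := finite_of_finite_type_of_isJacobsonRing k (A ⧸ M)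
  exact IsAlgClosed.algebraMap_bijective_of_isIntegral.2

def quotientDegrees {ι A σ : Type*} [AddMonoid ι] [CommRing A] [SetLike σ A] (𝒜 : ι → σ)
    [SetLike.GradedMonoid 𝒜] (P : Ideal A) [P.IsPrime] : AddSubmonoid ι where
  carrier := {n | ∃ r ∈ 𝒜 n, r ∉ P}
  zero_mem' := ⟨1, SetLike.GradedOne.one_mem, (P.ne_top_iff_one).mp Ideal.IsPrime.ne_top'⟩
  add_mem' := fun ⟨r, hr, hrP⟩ ⟨s, hs, hsP⟩ =>
    ⟨r * s, SetLike.mul_mem_graded hr hs, fun h => (Ideal.IsPrime.mem_or_mem' h).elim hrP hsP⟩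

theorem HomogeneousIdeal.isPrime_irrelevant {A σ : Type*} [CommRing A] [IsDomain A]
    [SetLike σ A] [AddSubmonoidClass σ A] (𝒜 : ℕ → σ) [GradedRing 𝒜] :
    (irrelevant 𝒜).toIdeal.IsPrime :=
  RingHom.ker_isPrime _

namespace GradedAlgebra

variable {k R : Type*} [Field k] [CommRing R] [Algebra k R]
  (𝒜 : ℕ → Submodule k R) [GradedAlgebra 𝒜]

theorem exists_decompose_zero_eq_algebraMap (h0 : 𝒜 0 = Submodule.span k {1}) (r : R) :
    ∃ c : k, (decompose 𝒜 r 0 : R) = algebraMap k R c := by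
  have hr : (decompose 𝒜 r 0 : R) ∈ Submodule.span k {1} := h0 ▸ (decompose 𝒜 r 0).2
  obtain ⟨c, hc⟩ := Submodule.mem_span_singleton.mp hr
  exact ⟨c, by rw [← hc, Algebra.algebraMap_eq_smul_one]⟩

theorem mem_of_mem_span_of_le (h0 : 𝒜 0 = Submodule.span k {1}) {n : ℕ} {V : Submodule k R}
    (hV : V ≤ 𝒜 n) {r : R} (hr : r ∈ 𝒜 n) (hrV : r ∈ Ideal.span (V : Set R)) : r ∈ V := by
  obtain ⟨c, hcV, rfl⟩ := (Submodule.mem_span_set (R := R)).mp hrV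
  have hterm : ∀ v ∈ c.support, (decompose 𝒜 (c v * v) n : R) ∈ V := by
    intro v hv
    obtain ⟨a, ha⟩ := exists_decompose_zero_eq_algebraMap 𝒜 h0 (c v)
    have hvn : (decompose 𝒜 (c v * v) (0 + n) : R) = decompose 𝒜 (c v) 0 * v :=
      coe_decompose_mul_add_of_right_mem 𝒜 (hV (hcV hv))
    rw [zero_add] at hvn
    rw [hvn, ha, ← Algebra.smul_def]
    exact V.smul_mem a (hcV hv)
  rw [← decompose_of_mem_same 𝒜 hr, Finsupp.sum, ← GradedRing.proj_apply, map_sum]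
  exact V.sum_mem hterm

theorem finiteDimensional_of_finiteType (h0 : 𝒜 0 = Submodule.span k {1})
    [Algebra.FiniteType k R] (n : ℕ) : FiniteDimensional k (𝒜 n) := by
  have := Algebra.FiniteType.isNoetherianRing k R
  let φ : Submodule k (𝒜 n) → Ideal R := fun W => .span (W.map (𝒜 n).subtype : Set R)
  have hφ : StrictMono φ := by
    refine Monotone.strictMono_of_injective
      (fun W₁ W₂ h => Ideal.span_mono (Submodule.map_mono h)) fun W₁ W₂ h => ?_
    have key : ∀ W : Submodule k (𝒜 n), ∀ w : 𝒜 n, w ∈ W ↔ (w : R) ∈ φ W := fun W w =>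
      ⟨fun hw => Ideal.subset_span ⟨w, hw, rfl⟩, fun hw => by
        simpa using mem_of_mem_span_of_le 𝒜 h0 (Submodule.map_subtype_le _ W) w.2 hw⟩
    ext w
    rw [key, key, h]
  have : WellFoundedGT (Submodule k (𝒜 n)) := hφ.wellFoundedGT
  have : IsNoetherian k (𝒜 n) := isNoetherian_iff'.mpr inferInstance
  exact IsNoetherian.iff_fg.mp inferInstance

theorem toIdeal_le_irrelevant (h0 : 𝒜 0 = Submodule.span k {1}) (P : HomogeneousIdeal 𝒜)
    (hP : P.toIdeal ≠ ⊤) : P.toIdeal ≤ (irrelevant 𝒜).toIdeal := by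
  intro a ha
  obtain ⟨c, hc⟩ := exists_decompose_zero_eq_algebraMap 𝒜 h0 a
  have hc0 : c = 0 := by
    by_contra hc0
    refine hP (Ideal.eq_top_of_isUnit_mem _ (P.isHomogeneous 0 ha) ?_)
    rw [hc]
    exact (IsUnit.mk0 c hc0).map (algebraMap k R)
  rw [HomogeneousIdeal.mem_iff, mem_irrelevant_iff, GradedRing.proj_apply, hc, hc0, map_zero]

def quotientPiece (P : Ideal R) (n : ℕ) : Submodule k (R ⧸ P) :=
  (𝒜 n).map (Ideal.Quotient.mkₐ k P).toLinearMap

variable [IsDomain R]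

theorem finrank_eq_finrank_quotientPiece_add {d : ℕ} {x : R} (hxd : x ∈ 𝒜 d) (hx : x ≠ 0)
    (n : ℕ) [FiniteDimensional k (𝒜 (n + d))] :
    Module.finrank k (𝒜 (n + d)) =
      Module.finrank k (quotientPiece 𝒜 (Ideal.span {x}) (n + d)) + Module.finrank k (𝒜 n) := by
  let g := (Ideal.Quotient.mkₐ k (Ideal.span {x})).toLinearMap.domRestrict (𝒜 (n + d))
  let f : 𝒜 n →ₗ[k] 𝒜 (n + d) :=
    (LinearMap.mulRight k x).restrict fun r hr => SetLike.mul_mem_graded hr hxd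
  have hf : Function.Injective f := fun r s h =>
    Subtype.ext (mul_right_cancel₀ hx (congrArg Subtype.val h))
  have hker : LinearMap.ker g = LinearMap.range f := by
    ext r
    rw [LinearMap.mem_ker, LinearMap.mem_range]
    constructor
    · intro hr
      obtain ⟨y, hy⟩ := Ideal.mem_span_singleton'.mp (Ideal.Quotient.eq_zero_iff_mem.mp hr)
      refine ⟨decompose 𝒜 y n, Subtype.ext ?_⟩
      change (decompose 𝒜 y n : R) * x = r
      rw [← coe_decompose_mul_add_of_right_mem 𝒜 hxd, hy]
      exact decompose_of_mem_same 𝒜 r.2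
    · rintro ⟨s, rfl⟩
      exact Ideal.Quotient.eq_zero_iff_mem.mpr
        (Ideal.mul_mem_left _ _ (Ideal.mem_span_singleton_self x))
  rw [← g.finrank_range_add_finrank_ker, LinearMap.range_domRestrict, hker,
    LinearMap.finrank_range_of_inj hf]
  rfl

theorem irrelevant_le_of_lt (h0 : 𝒜 0 = Submodule.span k {1}) (hdim : ringKrullDim R ≤ 2)
    {p : Ideal R} [p.IsPrime] (hp : p ≠ ⊥) (P : HomogeneousIdeal 𝒜) [P.toIdeal.IsPrime]
    (hpP : p < P.toIdeal) : (irrelevant 𝒜).toIdeal ≤ P.toIdeal := by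
  by_contra h
  have hP : P.toIdeal < (irrelevant 𝒜).toIdeal :=
    lt_of_le_not_ge (toIdeal_le_irrelevant 𝒜 h0 P Ideal.IsPrime.ne_top') h
  have := Order.three_le_krullDim_of_lt (α := PrimeSpectrum R)
    (a := ⟨⊥, Ideal.isPrime_bot⟩) (b := ⟨p, ‹_›⟩) (c := ⟨P.toIdeal, ‹_›⟩)
    (d := ⟨_, isPrime_irrelevant 𝒜⟩) (bot_lt_iff_ne_bot.mpr hp : (⊥ : Ideal R) < p) hpP hP
  have : (3 : WithBot ℕ∞) ≤ 2 := this.trans hdim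
  norm_num at this

theorem irrelevant_le_of_homogeneous_mem (h0 : 𝒜 0 = Submodule.span k {1})
    (hdim : ringKrullDim R ≤ 2) (p : HomogeneousIdeal 𝒜) [p.toIdeal.IsPrime]
    (hp : p.toIdeal ≠ ⊥) {Q : Ideal R} [Q.IsPrime] (hpQ : p.toIdeal ≤ Q) {w : R}
    (hw : SetLike.IsHomogeneousElem 𝒜 w) (hwQ : w ∈ Q) (hwp : w ∉ p.toIdeal) :
    (irrelevant 𝒜).toIdeal ≤ Q := by
  have : (Q.homogeneousCore 𝒜).toIdeal.IsPrime := Ideal.IsPrime.homogeneousCore ‹_›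
  have hwQ' : w ∈ (Q.homogeneousCore 𝒜).toIdeal :=
    Ideal.mem_homogeneousCore_of_homogeneous_of_mem hw hwQ
  have hpQ' : p.toIdeal < (Q.homogeneousCore 𝒜).toIdeal :=
    lt_of_le_of_ne ((Ideal.homogeneousCore.gc 𝒜).le_iff_le.mp hpQ) fun h => hwp (h ▸ hwQ')
  exact (irrelevant_le_of_lt 𝒜 h0 hdim hp _ hpQ').trans
    (Ideal.toIdeal_homogeneousCore_le 𝒜 Q)

variable [IsAlgClosed k] [Algebra.FiniteType k R]

theorem exists_sub_smul_mem (h0 : 𝒜 0 = Submodule.span k {1}) (hdim : ringKrullDim R ≤ 2)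
    (p : HomogeneousIdeal 𝒜) [p.toIdeal.IsPrime] (hp : p.toIdeal ≠ ⊥) {m : ℕ} (hm : 0 < m)
    {u v : R} (hu : u ∈ 𝒜 m) (hv : v ∈ 𝒜 m) (hup : u ∉ p.toIdeal) :
    ∃ c : k, v - c • u ∈ p.toIdeal := by
  have : IsJacobsonRing R := isJacobsonRing_of_finiteType (A := k)
  obtain ⟨M, ⟨hpM, hM⟩, huM⟩ := Ideal.eq_jacobson_iff_notMem.mp
    (IsJacobsonRing.out ‹_› (Ideal.IsPrime.isRadical ‹_›)) u hup
  have hM := Ideal.Quotient.algebraMap_surjective_of_isMaximal (k := k) M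
  obtain ⟨a, ha⟩ := hM (Ideal.Quotient.mk M u)
  obtain ⟨b, hb⟩ := hM (Ideal.Quotient.mk M v)
  have ha0 : a ≠ 0 := by
    rintro rfl
    exact huM (Ideal.Quotient.eq_zero_iff_mem.mp (by rw [← ha, map_zero]))
  refine ⟨b / a, by_contra fun hw => huM ?_⟩
  have hwM : v - (b / a) • u ∈ M := by
    rw [← Ideal.Quotient.eq_zero_iff_mem, ← Ideal.Quotient.mkₐ_eq_mk k, map_sub, map_smul,
      Ideal.Quotient.mkₐ_eq_mk, ← ha, ← hb, Algebra.smul_def, ← map_mul, div_mul_cancel₀ b ha0,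
      sub_self]
  exact irrelevant_le_of_homogeneous_mem 𝒜 h0 hdim p hp hpM
    ⟨m, sub_mem hv (Submodule.smul_mem _ _ hu)⟩ hwM hw (mem_irrelevant_of_mem 𝒜 hm hu)

theorem finrank_quotientPiece_eq_one (h0 : 𝒜 0 = Submodule.span k {1})
    (hdim : ringKrullDim R ≤ 2) (p : HomogeneousIdeal 𝒜) [p.toIdeal.IsPrime]
    (hp : p.toIdeal ≠ ⊥) {m : ℕ} (hm : 0 < m) {u : R} (hu : u ∈ 𝒜 m) (hup : u ∉ p.toIdeal) :
    Module.finrank k (quotientPiece 𝒜 p.toIdeal m) = 1 := by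
  have hline : quotientPiece 𝒜 p.toIdeal m = k ∙ Ideal.Quotient.mk p.toIdeal u := by
    refine le_antisymm ?_ (Submodule.span_le.mpr (Set.singleton_subset_iff.mpr ⟨u, hu, rfl⟩))
    rintro _ ⟨v, hv, rfl⟩
    obtain ⟨c, hc⟩ := exists_sub_smul_mem 𝒜 h0 hdim p hp hm hu hv hup
    refine Submodule.mem_span_singleton.mpr ⟨c, ?_⟩
    change c • Ideal.Quotient.mk _ u = Ideal.Quotient.mk _ v
    rw [← Ideal.Quotient.mkₐ_eq_mk k, ← map_smul, eq_comm, ← sub_eq_zero, ← map_sub]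
    exact Ideal.Quotient.eq_zero_iff_mem.mpr hc
  rw [hline]
  exact finrank_span_singleton (mt Ideal.Quotient.eq_zero_iff_mem.mp hup)

end GradedAlgebra

theorem stmt_19_general {k R : Type*} [Field k] [IsAlgClosed k] [CommRing R] [IsDomain R]
    [Algebra k R]
    (𝒜 : ℕ → Submodule k R) [GradedAlgebra 𝒜]
    (h0 : 𝒜 0 = Submodule.span k {1})
    (hft : Algebra.FiniteType k R)
    (hdim : ringKrullDim R = 2)
    (d : ℕ) (x : R) (hxd : x ∈ 𝒜 d) (hx : Prime x)
    (hirr : ∀ m : ℕ, (∀ n : ℕ, (∃ r ∈ 𝒜 n, r ∉ Ideal.span {x}) → m ∣ n) → m = 1) :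
    ∃ N : ℕ, ∀ n : ℕ, N ≤ n →
      Module.finrank k (𝒜 (n + d)) = 1 + Module.finrank k (𝒜 n) := by
  let p : HomogeneousIdeal 𝒜 :=
    ⟨Ideal.span {x}, Ideal.homogeneous_span 𝒜 _ (by simpa using ⟨d, hxd⟩)⟩
  have : p.toIdeal.IsPrime := (Ideal.span_singleton_prime hx.ne_zero).mpr hx
  have hp : p.toIdeal ≠ ⊥ := Ideal.span_singleton_eq_bot.not.mpr hx.ne_zero
  obtain ⟨N, hN⟩ := Nat.exists_forall_ge_mem_of_setGcd_eq_one (quotientDegrees 𝒜 p.toIdeal)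
    (hirr _ fun n hn => Nat.setGcd_dvd_of_mem hn)
  -- `N + 1` makes the degree `n + d` positive.
  refine ⟨N + 1, fun n hn => ?_⟩
  obtain ⟨u, hu, hup⟩ := hN (n + d) (by omega)
  have := GradedAlgebra.finiteDimensional_of_finiteType 𝒜 h0 (n + d)
  rw [GradedAlgebra.finrank_eq_finrank_quotientPiece_add 𝒜 hxd hx.ne_zero,
    GradedAlgebra.finrank_quotientPiece_eq_one 𝒜 h0 hdim.le p hp (by omega) hu hup]

/-- Let `R` be an ℕ-graded domain of Krull dimension 2, finitely
generated over `R₀ = k` an algebraically closed field.  If `x ∈ R_d` (`d > 0`) is a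
prime element and the induced grading on `R/xR` is irredundant (the gcd of the degrees
`n` with `(R/xR)_n ≠ 0` is 1), then `dim_k R_{n+d} = 1 + dim_k R_n` for all `n ≫ 0`. -/
theorem stmt_19 {k R : Type*} [Field k] [IsAlgClosed k] [CommRing R] [IsDomain R]
    [Algebra k R]
    (𝒜 : ℕ → Submodule k R) [GradedAlgebra 𝒜]
    (h0 : 𝒜 0 = Submodule.span k {1})
    (hft : Algebra.FiniteType k R)
    (hdim : ringKrullDim R = 2)
    (d : ℕ) (hd : 0 < d) (x : R) (hxd : x ∈ 𝒜 d) (hx : Prime x)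
    (hirr : ∀ m : ℕ, (∀ n : ℕ, (∃ r ∈ 𝒜 n, r ∉ Ideal.span {x}) → m ∣ n) → m = 1) :
    ∃ N : ℕ, ∀ n : ℕ, N ≤ n →
      Module.finrank k (𝒜 (n + d)) = 1 + Module.finrank k (𝒜 n) :=
  stmt_19_general 𝒜 h0 hft hdim d x hxd hx hirr
end
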